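/- arXiv:1811.09537 — 8 statements merged into one kernel-verified Lean document; each statement's English description precedes it below -/
import Mathlib

section
/- Let G be a finite connected block graph with no false twins that is not isomorphic to the path P_2 on 2 vertices nor to the path P_4 on 4 vertices. Then the open locating-dominating number of G satisfies γ^OLD(G) ≤ |V(G)| − 1. -/
open SimpleGraph

variable {V : Type*}

/-- The closed neighborhood `N[u]` of a vertex `u`. -/
def closedNbhd (G : SimpleGraph V) (u : V) : Set V := insert u (G.neighborSet u)

/-- `G` is identifiable: no two distinct vertices are true twins
(i.e. have the same closed neighborhood). -/
def Identifiable (G : SimpleGraph V) : Prop :=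
  ∀ u v : V, u ≠ v → closedNbhd G u ≠ closedNbhd G v

/-- `G` has no false twins: no two distinct vertices have the same open neighborhood. -/
def HasNoFalseTwins (G : SimpleGraph V) : Prop :=
  ∀ u v : V, u ≠ v → G.neighborSet u ≠ G.neighborSet v

/-- `C` is an identifying code of `G`. -/
def IsIdCode (G : SimpleGraph V) (C : Set V) : Prop :=
  (∀ u : V, (closedNbhd G u ∩ C).Nonempty) ∧
  ∀ u v : V, u ≠ v → closedNbhd G u ∩ C ≠ closedNbhd G v ∩ C

/-- `C` is a locating-dominating code of `G`. -/
def IsLDCode (G : SimpleGraph V) (C : Set V) : Prop :=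
  (∀ u : V, (closedNbhd G u ∩ C).Nonempty) ∧
  ∀ u v : V, u ∉ C → v ∉ C → u ≠ v → G.neighborSet u ∩ C ≠ G.neighborSet v ∩ C

/-- `C` is an open locating-dominating code of `G`. -/
def IsOLDCode (G : SimpleGraph V) (C : Set V) : Prop :=
  (∀ u : V, (G.neighborSet u ∩ C).Nonempty) ∧
  ∀ u v : V, u ≠ v → G.neighborSet u ∩ C ≠ G.neighborSet v ∩ C

/-- The identifying code number `γ^ID(G)`. -/
noncomputable def gammaID (G : SimpleGraph V) : ℕ :=
  sInf {n : ℕ | ∃ C : Set V, IsIdCode G C ∧ C.ncard = n}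

/-- The locating-dominating number `γ^LD(G)`. -/
noncomputable def gammaLD (G : SimpleGraph V) : ℕ :=
  sInf {n : ℕ | ∃ C : Set V, IsLDCode G C ∧ C.ncard = n}

/-- The open locating-dominating number `γ^OLD(G)`. -/
noncomputable def gammaOLD (G : SimpleGraph V) : ℕ :=
  sInf {n : ℕ | ∃ C : Set V, IsOLDCode G C ∧ C.ncard = n}

/-- `G` contains an induced cycle of length `n`. -/
def HasInducedCycle (G : SimpleGraph V) (n : ℕ) : Prop :=
  ∃ f : ZMod n → V, Function.Injective f ∧
    ∀ i j : ZMod n, G.Adj (f i) (f j) ↔ (j = i + 1 ∨ i = j + 1)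

/-- `G` contains an induced diamond (`K₄` minus an edge). -/
def HasInducedDiamond (G : SimpleGraph V) : Prop :=
  ∃ a b c d : V, a ≠ b ∧ a ≠ c ∧ a ≠ d ∧ b ≠ c ∧ b ≠ d ∧ c ≠ d ∧
    G.Adj a b ∧ G.Adj a c ∧ G.Adj b c ∧ G.Adj a d ∧ G.Adj b d ∧ ¬ G.Adj c d

/-- A block graph is a chordal (no induced cycle of length at least 4),
diamond-free graph. -/
def IsBlockGraph (G : SimpleGraph V) : Prop :=
  (∀ n : ℕ, 4 ≤ n → ¬ HasInducedCycle G n) ∧ ¬ HasInducedDiamond G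

/-- `n_Q(G)`: the number of maximal cliques of `G`. -/
noncomputable def nQ (G : SimpleGraph V) : ℕ :=
  {s : Set V | G.IsClique s ∧ ∀ t : Set V, G.IsClique t → s ⊆ t → s = t}.ncard


section AuxOLD

private lemma closureAll {V : Type*} {G : SimpleGraph V} (hc : G.Connected) {S : Set V}
    (hS : ∀ a ∈ S, ∀ b, G.Adj a b → b ∈ S) {a : V} (ha : a ∈ S) (v : V) : v ∈ S := by
  suffices H : ∀ (x y : V) (p : G.Walk x y), x ∈ S → y ∈ S by
    obtain ⟨p⟩ := hc a v; exact H a v p ha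
  intro x y p
  induction p with
  | nil => exact id
  | cons h p ih => exact fun hx => ih (hS _ hx _ h)

private lemma isoP2 {V : Type*} {G : SimpleGraph V} {a b : V} (hab : a ≠ b) (hAab : G.Adj a b)
    (hall : ∀ v : V, v = a ∨ v = b) : Nonempty (G ≃g pathGraph 2) := by
  let f : Fin 2 → V := ![a, b]
  have hf : Function.Bijective f := by
    constructor
    · intro i j h
      fin_cases i <;> fin_cases j <;> simp_all [f]
    · intro v; rcases hall v with rfl | rfl
      exacts [⟨0, rfl⟩, ⟨1, rfl⟩]
  let e : Fin 2 ≃ V := Equiv.ofBijective f hf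
  refine ⟨(SimpleGraph.Iso.symm ⟨e, ?_⟩ : G ≃g pathGraph 2)⟩
  intro i j
  fin_cases i <;> fin_cases j <;>
    first
    | exact iff_of_false (G.irrefl) (by rw [pathGraph_adj]; decide)
    | exact iff_of_true hAab (by rw [pathGraph_adj]; decide)
    | exact iff_of_true hAab.symm (by rw [pathGraph_adj]; decide)

private lemma isoP4 {V : Type*} {G : SimpleGraph V} {a b c d : V}
    (hab : a ≠ b) (hac : a ≠ c) (had : a ≠ d) (hbc : b ≠ c) (hbd : b ≠ d) (hcd : c ≠ d)
    (hAab : G.Adj a b) (hAbc : G.Adj b c) (hAcd : G.Adj c d)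
    (hNac : ¬ G.Adj a c) (hNad : ¬ G.Adj a d) (hNbd : ¬ G.Adj b d)
    (hall : ∀ v : V, v = a ∨ v = b ∨ v = c ∨ v = d) : Nonempty (G ≃g pathGraph 4) := by
  have hNca : ¬ G.Adj c a := fun h => hNac h.symm
  have hNda : ¬ G.Adj d a := fun h => hNad h.symm
  have hNdb : ¬ G.Adj d b := fun h => hNbd h.symm
  let f : Fin 4 → V := ![a, b, c, d]
  have hf : Function.Bijective f := by
    constructor
    · intro i j h
      fin_cases i <;> fin_cases j <;> simp_all [f]
    · intro v; rcases hall v with rfl | rfl | rfl | rfl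
      exacts [⟨0, rfl⟩, ⟨1, rfl⟩, ⟨2, rfl⟩, ⟨3, rfl⟩]
  let e : Fin 4 ≃ V := Equiv.ofBijective f hf
  refine ⟨(SimpleGraph.Iso.symm ⟨e, ?_⟩ : G ≃g pathGraph 4)⟩
  intro i j
  fin_cases i <;> fin_cases j <;>
    first
    | exact iff_of_false (G.irrefl) (by rw [pathGraph_adj]; decide)
    | exact iff_of_true hAab (by rw [pathGraph_adj]; decide)
    | exact iff_of_true hAab.symm (by rw [pathGraph_adj]; decide)
    | exact iff_of_true hAbc (by rw [pathGraph_adj]; decide)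
    | exact iff_of_true hAbc.symm (by rw [pathGraph_adj]; decide)
    | exact iff_of_true hAcd (by rw [pathGraph_adj]; decide)
    | exact iff_of_true hAcd.symm (by rw [pathGraph_adj]; decide)
    | exact iff_of_false hNac (by rw [pathGraph_adj]; decide)
    | exact iff_of_false hNca (by rw [pathGraph_adj]; decide)
    | exact iff_of_false hNad (by rw [pathGraph_adj]; decide)
    | exact iff_of_false hNda (by rw [pathGraph_adj]; decide)
    | exact iff_of_false hNbd (by rw [pathGraph_adj]; decide)
    | exact iff_of_false hNdb (by rw [pathGraph_adj]; decide)

private lemma oldHelper {V : Type*} {G : SimpleGraph V} (hB : IsBlockGraph G)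
    (hdom : ∀ z : V, (G.neighborSet z).Nonempty)
    {u v w : V} (huv : u ≠ v) (hwv : w ∈ G.neighborSet v) (hwu : w ∉ G.neighborSet u)
    (heq : G.neighborSet u \ {w} = G.neighborSet v \ {w}) :
    ∃ x, G.neighborSet u = {x} ∧ G.neighborSet v = {x, w} := by
  have hsub : G.neighborSet u ⊆ G.neighborSet v := by
    intro z hz
    have hzw : z ≠ w := fun h => hwu (h ▸ hz)
    have h2 : z ∈ G.neighborSet u \ {w} := ⟨hz, hzw⟩
    rw [heq] at h2; exact h2.1
  have hvu : v ∉ G.neighborSet u := fun h => G.irrefl (hsub h)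
  have hnuv : ¬ G.Adj u v := fun h => hvu h
  obtain ⟨x, hx⟩ := hdom u
  have hxu : G.Adj u x := hx
  have hxv : G.Adj v x := hsub hx
  have hNu : G.neighborSet u = {x} := by
    by_contra hne1
    have hy : ∃ y, y ∈ G.neighborSet u ∧ y ≠ x := by
      by_contra hy; push_neg at hy
      exact hne1 (Set.eq_singleton_iff_unique_mem.2 ⟨hx, fun y h => hy y h⟩)
    obtain ⟨y, hy, hyx⟩ := hy
    have hyu : G.Adj u y := hy
    have hyv : G.Adj v y := hsub hy
    have hxnv : x ≠ v := fun h => G.irrefl (h ▸ hxv)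
    have hynv : y ≠ v := fun h => G.irrefl (h ▸ hyv)
    by_cases hxy : G.Adj x y
    · exact hB.2 ⟨x, y, u, v, hyx.symm, hxu.ne', hxnv, hyu.ne', hynv, huv,
        hxy, hxu.symm, hyu.symm, hxv.symm, hyv.symm, hnuv⟩
    · apply hB.1 4 le_rfl
      have hnyx : ¬ G.Adj y x := fun h => hxy h.symm
      have hnvu : ¬ G.Adj v u := fun h => hnuv h.symm
      let f : ZMod 4 → V := fun i => if i = 0 then u else if i = 1 then x else if i = 2 then v else y
      have f0 : f 0 = u := rfl
      have f1 : f 1 = x := by simp only [f]; rw [if_neg (by decide)]; simp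
      have f2 : f 2 = v := by simp only [f]; rw [if_neg (by decide), if_neg (by decide)]; simp
      have f3 : f 3 = y := by simp only [f]; rw [if_neg (by decide), if_neg (by decide), if_neg (by decide)]
      have e4 : ∀ i : ZMod 4, i = 0 ∨ i = 1 ∨ i = 2 ∨ i = 3 := by decide
      have hux : u ≠ x := hxu.ne
      have huy : u ≠ y := hyu.ne
      refine ⟨f, ?_, ?_⟩
      · intro i j h
        rcases e4 i with rfl | rfl | rfl | rfl <;> rcases e4 j with rfl | rfl | rfl | rfl <;>
          simp only [f0, f1, f2, f3] at h <;>
          first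
          | rfl
          | exact absurd h hux | exact absurd h hux.symm
          | exact absurd h huv | exact absurd h huv.symm
          | exact absurd h huy | exact absurd h huy.symm
          | exact absurd h hxnv | exact absurd h hxnv.symm
          | exact absurd h hyx | exact absurd h hyx.symm
          | exact absurd h hynv | exact absurd h hynv.symm
      · intro i j
        rcases e4 i with rfl | rfl | rfl | rfl <;> rcases e4 j with rfl | rfl | rfl | rfl <;>
          simp only [f0, f1, f2, f3] <;>
          first
          | exact iff_of_false (G.irrefl) (by decide)
          | exact iff_of_true hxu (by decide) | exact iff_of_true hxu.symm (by decide)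
          | exact iff_of_true hyu (by decide) | exact iff_of_true hyu.symm (by decide)
          | exact iff_of_true hxv (by decide) | exact iff_of_true hxv.symm (by decide)
          | exact iff_of_true hyv (by decide) | exact iff_of_true hyv.symm (by decide)
          | exact iff_of_false hnuv (by decide) | exact iff_of_false hnvu (by decide)
          | exact iff_of_false hxy (by decide) | exact iff_of_false hnyx (by decide)
  refine ⟨x, hNu, ?_⟩
  ext z
  constructor
  · intro hz
    by_cases hzw : z = w
    · exact Or.inr hzw
    · have h2 : z ∈ G.neighborSet v \ {w} := ⟨hz, hzw⟩
      rw [← heq] at h2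
      exact Or.inl (by rw [hNu] at h2; exact h2.1)
  · rintro (rfl | rfl)
    · exact hxv
    · exact hwv

private lemma badPair {V : Type*} {G : SimpleGraph V} (hB : IsBlockGraph G)
    (hdom : ∀ z : V, (G.neighborSet z).Nonempty) {u v w : V} (huv : u ≠ v)
    (hne : G.neighborSet u ≠ G.neighborSet v)
    (heq : G.neighborSet u \ {w} = G.neighborSet v \ {w}) :
    (∃ x, G.neighborSet u = {x} ∧ G.neighborSet v = {x, w}) ∨
      (∃ x, G.neighborSet v = {x} ∧ G.neighborSet u = {x, w}) := by
  have key : ∀ z, z ≠ w → (z ∈ G.neighborSet u ↔ z ∈ G.neighborSet v) := by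
    intro z hz
    constructor
    · intro h
      have h2 : z ∈ G.neighborSet u \ {w} := ⟨h, hz⟩
      rw [heq] at h2; exact h2.1
    · intro h
      have h2 : z ∈ G.neighborSet v \ {w} := ⟨h, hz⟩
      rw [← heq] at h2; exact h2.1
  by_cases hwu : w ∈ G.neighborSet u
  · by_cases hwv : w ∈ G.neighborSet v
    · exfalso; apply hne; ext z
      by_cases hz : z = w
      · subst hz; simp [hwu, hwv]
      · exact key z hz
    · exact Or.inr (oldHelper hB hdom huv.symm hwu hwv heq.symm)
  · by_cases hwv : w ∈ G.neighborSet v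
    · exact Or.inl (oldHelper hB hdom huv hwv hwu heq)
    · exfalso; apply hne; ext z
      by_cases hz : z = w
      · subst hz; simp [hwu, hwv]
      · exact key z hz

end AuxOLD

/-- For every finite connected false-twin-free block graph `G` that is
isomorphic neither to `P₂` nor to `P₄`, `γ^OLD(G) ≤ |V(G)| - 1`. -/
theorem old_code_le_card_sub_one {V : Type*} [Fintype V] (G : SimpleGraph V)
    (hB : IsBlockGraph G) (hc : G.Connected) (hft : HasNoFalseTwins G)
    (h2 : ¬ Nonempty (G ≃g pathGraph 2)) (h4 : ¬ Nonempty (G ≃g pathGraph 4)) :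
    gammaOLD G ≤ Fintype.card V - 1 := by
  classical
  by_cases hdom : ∀ z : V, (G.neighborSet z).Nonempty
  · -- main case
    suffices hgood : ∃ w : V, (∀ z, (G.neighborSet z \ {w}).Nonempty) ∧
        ∀ u v : V, u ≠ v → G.neighborSet u \ {w} ≠ G.neighborSet v \ {w} by
      obtain ⟨w, hA, hBw⟩ := hgood
      have hcode : IsOLDCode G ({w}ᶜ : Set V) := by
        constructor
        · intro z; rw [← Set.diff_eq]; exact hA z
        · intro a b hab h
          exact hBw a b hab (by rwa [Set.diff_eq, Set.diff_eq])
      have hcard : ({w}ᶜ : Set V).ncard = Fintype.card V - 1 := by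
        rw [Set.compl_eq_univ_diff, Set.ncard_diff (Set.subset_univ _),
          Set.ncard_univ, Set.ncard_singleton, Nat.card_eq_fintype_card]
      exact hcard ▸ Nat.sInf_le ⟨({w}ᶜ : Set V), hcode, rfl⟩
    by_cases hleaf : ∃ u x : V, G.neighborSet u = {x}
    · obtain ⟨u0, x0, hu0⟩ := hleaf
      have hAdj0 : G.Adj u0 x0 := by
        have : x0 ∈ G.neighborSet u0 := by rw [hu0]; rfl
        exact this
      -- does (A) hold at u0 ?
      by_cases hA0 : ∀ z, (G.neighborSet z \ {u0}).Nonempty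
      · by_cases hB0 : ∀ u v : V, u ≠ v → G.neighborSet u \ {u0} ≠ G.neighborSet v \ {u0}
        · exact ⟨u0, hA0, hB0⟩
        · -- extract structure from a bad pair at u0
          push_neg at hB0
          obtain ⟨u, v, huv, heq⟩ := hB0
          have hlm : (∃ l m x : V, l ≠ m ∧ G.neighborSet l = {x} ∧
              G.neighborSet m = {x, u0}) := by
            rcases badPair hB hdom huv (hft u v huv) heq with ⟨x, h1, h2⟩ | ⟨x, h1, h2⟩
            · exact ⟨u, v, x, huv, h1, h2⟩
            · exact ⟨v, u, x, huv.symm, h1, h2⟩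
          obtain ⟨l, m, x, hlmne, hl, hm⟩ := hlm
          have hxu0 : x ≠ u0 := by
            intro h; subst h
            have hlx : l ∈ G.neighborSet x := by
              have : x ∈ G.neighborSet l := by rw [hl]; rfl
              exact G.adj_symm this
            have hmx : m ∈ G.neighborSet x := by
              have : x ∈ G.neighborSet m := by rw [hm]; exact Or.inl rfl
              exact G.adj_symm this
            rw [hu0] at hlx hmx
            exact hlmne (hlx.trans hmx.symm)
          have hmx0 : m = x0 := by
            have : u0 ∈ G.neighborSet m := by rw [hm]; exact Or.inr rfl
            have h2 : m ∈ G.neighborSet u0 := G.adj_symm this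
            rwa [hu0] at h2
          rw [hmx0] at hm hlmne
          -- now hm : N x0 = {x, u0}
          have hAdjx0x : G.Adj x0 x := by
            have : x ∈ G.neighborSet x0 := by rw [hm]; exact Or.inl rfl
            exact this
          have hxx0 : x ≠ x0 := hAdjx0x.ne'
          have hAdjlx : G.Adj l x := by
            have : x ∈ G.neighborSet l := by rw [hl]; rfl
            exact this
          have hlu0 : l ≠ u0 := by
            intro h
            have h1 : ({x} : Set V) = {x0} := by rw [← hl, h, hu0]
            exact hxx0 (Set.singleton_eq_singleton_iff.mp h1)
          have hlx0 : l ≠ x0 := by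
            intro h; subst h
            rw [hl] at hm
            have : u0 ∈ ({x} : Set V) := by rw [hm]; exact Or.inr rfl
            exact hxu0 this.symm
          have hlx' : l ≠ x := hAdjlx.ne
          -- candidate w := l ; (A) holds at l
          have hAl : ∀ z, (G.neighborSet z \ {l}).Nonempty := by
            intro z
            obtain ⟨a, ha⟩ := hdom z
            by_cases hal : a = l
            · have hlz : l ∈ G.neighborSet z := hal ▸ ha
              have hz2 : z ∈ G.neighborSet l := G.adj_symm hlz
              rw [hl] at hz2
              have hzx : z = x := hz2
              subst hzx
              exact ⟨x0, G.adj_symm hAdjx0x, hlx0.symm⟩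
            · exact ⟨a, ha, hal⟩
          by_cases hBl2 : ∀ u v : V, u ≠ v → G.neighborSet u \ {l} ≠ G.neighborSet v \ {l}
          · exact ⟨l, hAl, hBl2⟩
          · -- second bad pair forces G = P4
            exfalso
            push_neg at hBl2
            obtain ⟨u', v', huv', heq'⟩ := hBl2
            have hlm' : (∃ l' m' x' : V, l' ≠ m' ∧ G.neighborSet l' = {x'} ∧
                G.neighborSet m' = {x', l}) := by
              rcases badPair hB hdom huv' (hft u' v' huv') heq' with ⟨x', h1, h2⟩ | ⟨x', h1, h2⟩
              · exact ⟨u', v', x', huv', h1, h2⟩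
              · exact ⟨v', u', x', huv'.symm, h1, h2⟩
            obtain ⟨l', m', x', hlmne', hl', hm'⟩ := hlm'
            have hx'l : x' ≠ l := by
              intro h
              rw [h] at hl' hm'
              have h1 : l' ∈ G.neighborSet l := by
                have : l ∈ G.neighborSet l' := by rw [hl']; rfl
                exact G.adj_symm this
              have h2 : m' ∈ G.neighborSet l := by
                have : l ∈ G.neighborSet m' := by rw [hm']; exact Or.inl rfl
                exact G.adj_symm this
              rw [hl] at h1 h2
              exact hlmne' (h1.trans h2.symm)
            have hm'x : m' = x := by
              have : l ∈ G.neighborSet m' := by rw [hm']; exact Or.inr rfl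
              have h2 : m' ∈ G.neighborSet l := G.adj_symm this
              rwa [hl] at h2
            rw [hm'x] at hm' hlmne'
            -- hm' : N x = {x', l}
            have hx'x0 : x' = x0 := by
              have hx0x : x0 ∈ G.neighborSet x := G.adj_symm hAdjx0x
              rw [hm'] at hx0x
              rcases hx0x with h | h
              · exact h.symm
              · exact absurd h.symm hlx0
            rw [hx'x0] at hm' 
            -- Now : N u0 = {x0}, N x0 = {x, u0}, N x = {x0, l}, N l = {x}
            have hNu0x : ¬ G.Adj u0 x := by
              intro h
              have : x ∈ G.neighborSet u0 := h
              rw [hu0] at this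
              exact hxx0 this
            have hNu0l : ¬ G.Adj u0 l := by
              intro h
              have : l ∈ G.neighborSet u0 := h
              rw [hu0] at this
              exact hlx0 this
            have hNx0l : ¬ G.Adj x0 l := by
              intro h
              have : l ∈ G.neighborSet x0 := h
              rw [hm] at this
              rcases this with h' | h'
              · exact hlx' h'
              · exact hlu0 h'
            have hall : ∀ z : V, z = u0 ∨ z = x0 ∨ z = x ∨ z = l := by
              intro z
              have hz : z ∈ ({u0, x0, x, l} : Set V) := by
                refine closureAll hc ?_ (by exact Or.inl rfl : u0 ∈ ({u0, x0, x, l} : Set V)) z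
                rintro a (rfl | rfl | rfl | rfl) b hb
                · have : b ∈ G.neighborSet a := hb
                  rw [hu0] at this; subst this
                  exact Or.inr (Or.inl rfl)
                · have : b ∈ G.neighborSet a := hb
                  rw [hm] at this
                  rcases this with rfl | rfl
                  · exact Or.inr (Or.inr (Or.inl rfl))
                  · exact Or.inl rfl
                · have : b ∈ G.neighborSet a := hb
                  rw [hm'] at this
                  rcases this with rfl | rfl
                  · exact Or.inr (Or.inl rfl)
                  · exact Or.inr (Or.inr (Or.inr rfl))
                · have : b ∈ G.neighborSet a := hb
                  rw [hl] at this; subst this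
                  exact Or.inr (Or.inr (Or.inl rfl))
              exact hz
            exact h4 (isoP4 hAdj0.ne hxu0.symm hlu0.symm hxx0.symm hlx0.symm hlx'.symm
              hAdj0 hAdjx0x (G.adj_symm hAdjlx) hNu0x hNu0l hNx0l hall)
      · -- (A) fails at u0 : G = P2
        exfalso
        push_neg at hA0
        obtain ⟨z, hz⟩ := hA0
        rw [Set.diff_eq_empty] at hz
        obtain ⟨a, ha⟩ := hdom z
        have hau0 : a = u0 := hz ha
        rw [hau0] at ha
        have hzx0 : z = x0 := by
          have h3 : z ∈ G.neighborSet u0 := G.adj_symm ha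
          rwa [hu0] at h3
        rw [hzx0] at ha hz
        have hNx0 : G.neighborSet x0 = {u0} :=
          Set.eq_singleton_iff_unique_mem.2 ⟨ha, fun y hy => hz hy⟩
        have hall : ∀ z : V, z = u0 ∨ z = x0 := by
          intro z
          have hz2 : z ∈ ({u0, x0} : Set V) := by
            refine closureAll hc ?_ (by exact Or.inl rfl : u0 ∈ ({u0, x0} : Set V)) z
            rintro b (rfl | rfl) c hcadj
            · have : c ∈ G.neighborSet b := hcadj
              rw [hu0] at this; subst this
              exact Or.inr rfl
            · have : c ∈ G.neighborSet b := hcadj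
              rw [hNx0] at this; subst this
              exact Or.inl rfl
          exact hz2
        exact h2 (isoP2 hAdj0.ne hAdj0 hall)
    · -- no leaves : any w works
      push_neg at hleaf
      obtain ⟨w⟩ := hc.nonempty
      refine ⟨w, ?_, ?_⟩
      · intro z
        have hns : ¬ G.neighborSet z ⊆ {w} := by
          intro hsub
          obtain ⟨a, ha⟩ := hdom z
          have haw : a = w := hsub ha
          exact hleaf z w (Set.eq_singleton_iff_unique_mem.2 ⟨haw ▸ ha, fun y hy => hsub hy⟩)
        obtain ⟨b, hb, hbw⟩ := Set.not_subset.1 hns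
        exact ⟨b, hb, hbw⟩
      · intro u v huv heq
        rcases badPair hB hdom huv (hft u v huv) heq with ⟨x, h1, _⟩ | ⟨x, h1, _⟩
        · exact hleaf u x h1
        · exact hleaf v x h1
  · -- some vertex has no neighbor : no OLD-code exists at all
    push_neg at hdom
    obtain ⟨z, hz⟩ := hdom
    have hempty : {n : ℕ | ∃ C : Set V, IsOLDCode G C ∧ C.ncard = n} = ∅ := by
      ext n
      simp only [Set.mem_setOf_eq, Set.mem_empty_iff_false, iff_false]
      rintro ⟨C, ⟨hdomC, _⟩, _⟩
      obtain ⟨y, hy⟩ := hdomC z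
      rw [hz] at hy
      simp at hy
    rw [gammaOLD, hempty, Nat.sInf_empty]
    exact Nat.zero_le _
end

section
/- Let G be a finite identifiable block graph (i.e., a block graph with no true twins). Then the locating-dominating number of G satisfies γ^LD(G) ≤ n_Q(G), where n_Q(G) is the number of maximal cliques of G. -/
open SimpleGraph

variable {V : Type*}

/-- In a block graph, two nonadjacent distinct vertices have at most one common neighbor. -/
lemma BGaux.common_nbr (G : SimpleGraph V) (hB : IsBlockGraph G)
    {u v w1 w2 : V} (huv : ¬ G.Adj u v) (hne : u ≠ v) (hw : w1 ≠ w2)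
    (h1u : G.Adj u w1) (h1v : G.Adj v w1) (h2u : G.Adj u w2) (h2v : G.Adj v w2) : False := by
  have hvu : ¬ G.Adj v u := fun h => huv h.symm
  by_cases hww : G.Adj w1 w2
  · exact hB.2 ⟨w1, w2, u, v, hw, h1u.ne', h1v.ne', h2u.ne', h2v.ne', hne, hww,
      h1u.symm, h2u.symm, h1v.symm, h2v.symm, huv⟩
  have hww' : ¬ G.Adj w2 w1 := fun h => hww h.symm
  classical
  set F : ZMod 4 → V := fun i => if i = 0 then u else if i = 1 then w1 else if i = 2 then v else w2 with hF
  have hcases : ∀ i : ZMod 4, i = 0 ∨ i = 1 ∨ i = 2 ∨ i = 3 := by decide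
  have F0 : F 0 = u := by simp [hF]
  have F1 : F 1 = w1 := by simp [hF, show (1:ZMod 4) ≠ 0 from by decide]
  have F2 : F 2 = v := by
    simp [hF, show (2:ZMod 4) ≠ 0 from by decide, show (2:ZMod 4) ≠ 1 from by decide]
  have F3 : F 3 = w2 := by
    simp [hF, show (3:ZMod 4) ≠ 0 from by decide, show (3:ZMod 4) ≠ 1 from by decide,
      show (3:ZMod 4) ≠ 2 from by decide]
  refine hB.1 4 le_rfl ⟨F, ?_, ?_⟩
  · intro i j h
    rcases hcases i with rfl|rfl|rfl|rfl <;> rcases hcases j with rfl|rfl|rfl|rfl <;>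
      simp_all [h1u.ne, h1u.ne', h1v.ne, h1v.ne', h2u.ne, h2u.ne', h2v.ne, h2v.ne', hne,
        hne.symm, hw, hw.symm]
  · intro i j
    rcases hcases i with rfl|rfl|rfl|rfl <;> rcases hcases j with rfl|rfl|rfl|rfl <;>
      simp only [F0, F1, F2, F3] <;>
      first
      | exact iff_of_true h1u (by decide)
      | exact iff_of_true h1u.symm (by decide)
      | exact iff_of_true h1v (by decide)
      | exact iff_of_true h1v.symm (by decide)
      | exact iff_of_true h2u (by decide)
      | exact iff_of_true h2u.symm (by decide)
      | exact iff_of_true h2v (by decide)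
      | exact iff_of_true h2v.symm (by decide)
      | exact iff_of_false (G.irrefl) (by decide)
      | exact iff_of_false huv (by decide)
      | exact iff_of_false hvu (by decide)
      | exact iff_of_false hww (by decide)
      | exact iff_of_false hww' (by decide)

/-- Every clique extends to a maximal clique (finite vertex set). -/
lemma BGaux.exists_maximal_clique [Finite V] (G : SimpleGraph V) (s : Set V)
    (hs : G.IsClique s) :
    ∃ Q, (G.IsClique Q ∧ ∀ t, G.IsClique t → Q ⊆ t → Q = t) ∧ s ⊆ Q := by
  have hfin : {t : Set V | G.IsClique t ∧ s ⊆ t}.Finite := Set.toFinite _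
  obtain ⟨Q, hQ, hmax⟩ := Set.Finite.exists_maximalFor id _ hfin ⟨s, hs, subset_rfl⟩
  exact ⟨Q, ⟨hQ.1, fun t ht hsub => Set.Subset.antisymm hsub (hmax ⟨ht, hQ.2.trans hsub⟩ hsub)⟩, hQ.2⟩

lemma BGaux.pair_clique (G : SimpleGraph V) {u w : V} (h : G.Adj u w) :
    G.IsClique {u, w} := by
  intro x hx y hy hxy
  simp only [Set.mem_insert_iff, Set.mem_singleton_iff] at hx hy
  rcases hx with rfl|rfl <;> rcases hy with rfl|rfl <;>
    first | exact absurd rfl hxy | exact h | exact h.symm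

lemma BGaux.triple_clique (G : SimpleGraph V) {a b c : V}
    (hab : G.Adj a b) (hac : G.Adj a c) (hbc : G.Adj b c) : G.IsClique {a, b, c} := by
  intro x hx y hy hxy
  simp only [Set.mem_insert_iff, Set.mem_singleton_iff] at hx hy
  rcases hx with rfl|rfl|rfl <;> rcases hy with rfl|rfl|rfl <;>
    first | exact absurd rfl hxy | assumption | exact hab.symm | exact hac.symm | exact hbc.symm

/-- In a diamond-free graph, two distinct maximal cliques share at most one vertex. -/
lemma BGaux.inter_lemma (G : SimpleGraph V) (hB : IsBlockGraph G)
    {Q1 Q2 : Set V} (hQ1 : G.IsClique Q1 ∧ ∀ t, G.IsClique t → Q1 ⊆ t → Q1 = t)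
    (hQ2 : G.IsClique Q2 ∧ ∀ t, G.IsClique t → Q2 ⊆ t → Q2 = t)
    (hne : Q1 ≠ Q2) {u v : V} (hu1 : u ∈ Q1) (hu2 : u ∈ Q2) (hv1 : v ∈ Q1) (hv2 : v ∈ Q2)
    (huv : u ≠ v) : False := by
  have h12 : ¬ Q1 ⊆ Q2 := fun h => hne (hQ1.2 Q2 hQ2.1 h)
  obtain ⟨c, hc1, hc2⟩ := Set.not_subset.mp h12
  have hins : ¬ G.IsClique (insert c Q2) := by
    intro h
    exact hc2 ((hQ2.2 _ h (Set.subset_insert _ _)) ▸ Set.mem_insert c Q2)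
  have hd : ∃ d ∈ Q2, d ≠ c ∧ ¬ G.Adj c d := by
    by_contra h
    push_neg at h
    apply hins
    intro x hx y hy hxy
    rcases hx with rfl | hx
    · rcases hy with rfl | hy
      · exact absurd rfl hxy
      · exact h y hy (fun e => hxy e.symm)
    · rcases hy with rfl | hy
      · exact (h x hx hxy).symm
      · exact hQ2.1 hx hy hxy
  obtain ⟨d, hd2, hdc, hcd⟩ := hd
  have hcu : c ≠ u := fun e => hc2 (e ▸ hu2)
  have hcv : c ≠ v := fun e => hc2 (e ▸ hv2)
  have hdu : u ≠ d := by
    rintro rfl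
    exact hcd (hQ1.1 hc1 hu1 hcu)
  have hdv : v ≠ d := by
    rintro rfl
    exact hcd (hQ1.1 hc1 hv1 hcv)
  exact hB.2 ⟨u, v, c, d, huv, hcu.symm, hdu, hcv.symm, hdv, fun e => hdc e.symm,
    hQ1.1 hu1 hv1 huv, hQ1.1 hu1 hc1 hcu.symm, hQ1.1 hv1 hc1 hcv.symm,
    hQ2.1 hu2 hd2 hdu, hQ2.1 hv2 hd2 hdv, hcd⟩


/-- For every finite identifiable block graph `G`, `γ^LD(G) ≤ n_Q(G)`. -/
theorem ld_code_le_nQ {V : Type*} [Fintype V] (G : SimpleGraph V)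
    (hB : IsBlockGraph G) (hI : Identifiable G) :
    gammaLD G ≤ nQ G := by
  classical
  by_cases hV : IsEmpty V
  · have hLD : IsLDCode G (∅ : Set V) :=
      ⟨fun u => (hV.false u).elim, fun u => (hV.false u).elim⟩
    have : gammaLD G ≤ 0 := Nat.sInf_le ⟨∅, hLD, Set.ncard_empty V⟩
    omega
  have hVne : Nonempty V := not_isEmpty_iff.mp hV
  set M : Set (Set V) := {s | G.IsClique s ∧ ∀ t, G.IsClique t → s ⊆ t → s = t} with hM
  have hQne : ∀ Q ∈ M, Q.Nonempty := by
    intro Q hQ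
    rcases Set.eq_empty_or_nonempty Q with rfl | h
    · obtain ⟨v⟩ := hVne
      have h1 : G.IsClique {v} := Set.pairwise_singleton v G.Adj
      have := hQ.2 {v} h1 (Set.empty_subset _)
      exact absurd this.symm (by simp)
    · exact h
  set f : Set V → V := fun Q =>
    if h : ∃ x ∈ Q, closedNbhd G x = Q then h.choose
    else if h2 : Q.Nonempty then h2.some else Classical.arbitrary V with hf
  set C : Set V := f '' M with hC
  -- f Q ∈ Q for maximal cliques Q
  have hfmem : ∀ Q ∈ M, f Q ∈ Q := by
    intro Q hQ
    rw [hf]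
    dsimp only
    split_ifs with h1 h2
    · exact h1.choose_spec.1
    · exact h2.some_mem
    · exact absurd (hQne Q hQ) h2
  -- if x is a simple vertex of Q then f Q = x
  have hsimple : ∀ Q ∈ M, ∀ x ∈ Q, closedNbhd G x = Q → f Q = x := by
    intro Q hQ x hx hcl
    have h : ∃ y ∈ Q, closedNbhd G y = Q := ⟨x, hx, hcl⟩
    have hfq : f Q = h.choose := by rw [hf]; exact dif_pos h
    have hcx : h.choose = x := by
      by_contra hcx
      exact hI _ _ hcx (h.choose_spec.2.trans hcl.symm)
    rw [hfq, hcx]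
  -- every vertex lies in a maximal clique
  have hmemQ : ∀ v : V, ∃ Q ∈ M, v ∈ Q := by
    intro v
    obtain ⟨Q, hQ, hsub⟩ :=
      BGaux.exists_maximal_clique G {v} (Set.pairwise_singleton v G.Adj)
    exact ⟨Q, hQ, hsub rfl⟩
  -- a maximal clique through u is contained in N[u]
  have hsubN : ∀ Q ∈ M, ∀ u ∈ Q, Q ⊆ closedNbhd G u := by
    intro Q hQ u hu q hq
    by_cases hqu : q = u
    · exact hqu ▸ Set.mem_insert _ _
    · exact Set.mem_insert_of_mem _ (hQ.1 hu hq (fun e => hqu e.symm))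
  -- a non-code vertex has a neighbor outside any given maximal clique through it
  have hcut : ∀ u, u ∉ C → ∀ Q ∈ M, u ∈ Q → ∃ w, G.Adj u w ∧ w ∉ Q := by
    intro u hu Q hQ huQ
    by_contra h
    push_neg at h
    have heq : closedNbhd G u = Q := by
      apply Set.Subset.antisymm
      · intro x hx
        rcases hx with rfl | hx
        · exact huQ
        · exact h x hx
      · exact hsubN Q hQ u huQ
    exact hu ⟨Q, hQ, hsimple Q hQ u huQ heq⟩
  -- f Q ≠ u for non-code u
  have hfneu : ∀ u, u ∉ C → ∀ Q ∈ M, f Q ≠ u := by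
    intro u hu Q hQ he
    exact hu ⟨Q, hQ, he⟩
  -- C is an LD-code
  have hLD : IsLDCode G C := by
    constructor
    · intro u
      obtain ⟨Q, hQ, huQ⟩ := hmemQ u
      exact ⟨f Q, hsubN Q hQ u huQ (hfmem Q hQ), ⟨Q, hQ, rfl⟩⟩
    · intro u v hu hv huv heq
      by_cases hadj : G.Adj u v
      · -- the unique maximal clique through u,v
        obtain ⟨Qv, hQv, hsubv⟩ := BGaux.exists_maximal_clique G {u, v} (BGaux.pair_clique G hadj)
        have huQv : u ∈ Qv := hsubv (Set.mem_insert _ _)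
        have hvQv : v ∈ Qv := hsubv (Set.mem_insert_of_mem _ rfl)
        obtain ⟨w, hw, hwQv⟩ := hcut u hu Qv hQv huQv
        obtain ⟨Q', hQ', hsub'⟩ := BGaux.exists_maximal_clique G {u, w} (BGaux.pair_clique G hw)
        have huQ' : u ∈ Q' := hsub' (Set.mem_insert _ _)
        have hwQ' : w ∈ Q' := hsub' (Set.mem_insert_of_mem _ rfl)
        have hQQ' : Q' ≠ Qv := fun e => hwQv (e ▸ hwQ')
        set x := f Q' with hx
        have hxQ' : x ∈ Q' := hfmem Q' hQ'
        have hxu : x ≠ u := hfneu u hu Q' hQ'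
        have hux : G.Adj u x := hQ'.1 huQ' hxQ' (fun e => hxu e.symm)
        have hxNC : x ∈ G.neighborSet u ∩ C := ⟨hux, Q', hQ', rfl⟩
        rw [heq] at hxNC
        have hvx : G.Adj v x := hxNC.1
        -- {u,v,x} is a clique; extend to maximal Q''
        obtain ⟨Q'', hQ'', hsub''⟩ :=
          BGaux.exists_maximal_clique G {u, v, x} (BGaux.triple_clique G hadj hux hvx)
        have huQ'' : u ∈ Q'' := hsub'' (Set.mem_insert _ _)
        have hvQ'' : v ∈ Q'' := hsub'' (Set.mem_insert_of_mem _ (Set.mem_insert _ _))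
        have hxQ'' : x ∈ Q'' :=
          hsub'' (Set.mem_insert_of_mem _ (Set.mem_insert_of_mem _ rfl))
        have hQ''Qv : Q'' = Qv := by
          by_contra hne''
          exact BGaux.inter_lemma G hB hQ'' hQv hne'' huQ'' huQv hvQ'' hvQv huv
        have hxQv : x ∈ Qv := hQ''Qv ▸ hxQ''
        exact BGaux.inter_lemma G hB hQ' hQv hQQ' huQ' huQv hxQ' hxQv (fun e => hxu e.symm)
      · obtain ⟨Q, hQ, huQ⟩ := hmemQ u
        obtain ⟨w, hw, hwQ⟩ := hcut u hu Q hQ huQ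
        obtain ⟨Q', hQ', hsub'⟩ := BGaux.exists_maximal_clique G {u, w} (BGaux.pair_clique G hw)
        have huQ' : u ∈ Q' := hsub' (Set.mem_insert _ _)
        have hwQ' : w ∈ Q' := hsub' (Set.mem_insert_of_mem _ rfl)
        have hQQ' : Q ≠ Q' := fun e => hwQ (e ▸ hwQ')
        set x1 := f Q with hx1
        set x2 := f Q' with hx2
        have hx1Q : x1 ∈ Q := hfmem Q hQ
        have hx2Q' : x2 ∈ Q' := hfmem Q' hQ'
        have hx1u : x1 ≠ u := hfneu u hu Q hQ
        have hx2u : x2 ≠ u := hfneu u hu Q' hQ'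
        have hux1 : G.Adj u x1 := hQ.1 huQ hx1Q (fun e => hx1u e.symm)
        have hux2 : G.Adj u x2 := hQ'.1 huQ' hx2Q' (fun e => hx2u e.symm)
        have hx12 : x1 ≠ x2 := by
          intro e
          exact BGaux.inter_lemma G hB hQ hQ' hQQ' huQ huQ' hx1Q (e ▸ hx2Q') hx1u.symm
        have h1 : x1 ∈ G.neighborSet u ∩ C := ⟨hux1, Q, hQ, rfl⟩
        have h2 : x2 ∈ G.neighborSet u ∩ C := ⟨hux2, Q', hQ', rfl⟩
        rw [heq] at h1 h2
        exact BGaux.common_nbr G hB hadj huv hx12 hux1 h1.1 hux2 h2.1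
  have h1 : gammaLD G ≤ C.ncard := Nat.sInf_le ⟨C, hLD, rfl⟩
  have h2 : C.ncard ≤ M.ncard := Set.ncard_image_le (Set.toFinite M)
  exact h1.trans h2
end

section
/- Let G be a finite connected identifiable block graph (i.e., a connected block graph with no true twins). Then |V(G)| ≤ 2·n_Q(G) − 1, where n_Q(G) is the number of maximal cliques of G. -/
open SimpleGraph

variable {V : Type*}

section AuxBG
open SimpleGraph Walk
variable {V : Type*}
variable {G : SimpleGraph V}

namespace BG

lemma support_eq_map_range {u v : V} (p : G.Walk u v) :
    p.support = (List.range (p.length+1)).map p.getVert := by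
  induction p with
  | nil => simp [Walk.getVert]
  | cons h q ih => simp [List.range_succ_eq_map, ih, List.map_map, Function.comp_def]

lemma isPath_iff_getVert_injOn {u v : V} (p : G.Walk u v) :
    p.IsPath ↔ ∀ i ≤ p.length, ∀ j ≤ p.length, p.getVert i = p.getVert j → i = j := by
  rw [Walk.isPath_def, support_eq_map_range]
  constructor
  · intro h i hi j hj hij
    exact List.inj_on_of_nodup_map h (by simp [Nat.lt_succ_iff, hi]) (by simp [Nat.lt_succ_iff, hj]) hij
  · intro h
    refine List.Nodup.map_on ?_ List.nodup_range
    intro i hi j hj hij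
    exact h i (by simpa [Nat.lt_succ_iff] using hi) j (by simpa [Nat.lt_succ_iff] using hj) hij

lemma getVert_injOn_of_isPath {u v : V} {p : G.Walk u v} (hp : p.IsPath) :
    ∀ i ≤ p.length, ∀ j ≤ p.length, p.getVert i = p.getVert j → i = j :=
  (isPath_iff_getVert_injOn p).1 hp

/-- take by index -/
def takeW : {u v : V} → (p : G.Walk u v) → (n : ℕ) → G.Walk u (p.getVert n)
  | _, _, .nil, _ => Walk.nil.copy rfl (by simp [Walk.getVert_of_length_le])
  | _, _, .cons h q, 0 => Walk.nil.copy rfl ((Walk.cons h q).getVert_zero).symm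
  | _, _, .cons h q, (n+1) => (Walk.cons h (takeW q n)).copy rfl (Walk.getVert_cons_succ _ h).symm

@[simp] lemma length_takeW {u v : V} (p : G.Walk u v) (n : ℕ) :
    (takeW p n).length = min n p.length := by
  induction p generalizing n with
  | nil => simp [takeW]
  | cons h q ih =>
    cases n with
    | zero => simp [takeW]
    | succ n => simp [takeW, ih, Nat.succ_min_succ]

lemma getVert_takeW {u v : V} (p : G.Walk u v) (n i : ℕ) :
    (takeW p n).getVert i = p.getVert (min i n) := by
  induction p generalizing n i with
  | nil => simp [takeW, Walk.getVert_of_length_le]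
  | cons h q ih =>
    cases n with
    | zero => simp [takeW, Walk.getVert_of_length_le]
    | succ n =>
      cases i with
      | zero => simp [takeW]
      | succ i => simp [takeW, Walk.getVert_cons_succ, ih, Nat.succ_min_succ]

@[simp] lemma length_drop {u v : V} (p : G.Walk u v) (n : ℕ) :
    (p.drop n).length = p.length - n := by
  induction p generalizing n with
  | nil => cases n <;> simp [Walk.drop]
  | cons h q ih =>
    cases n with
    | zero => simp [Walk.drop]
    | succ n => simp [Walk.drop, ih]

lemma getVert_drop {u v : V} (p : G.Walk u v) (n i : ℕ) :
    (p.drop n).getVert i = p.getVert (n + i) := by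
  induction p generalizing n with
  | nil => cases n <;> simp [Walk.drop, Walk.getVert_of_length_le]
  | cons h q ih =>
    cases n with
    | zero => simp [Walk.drop]
    | succ n =>
      simp [Walk.drop, ih, Nat.succ_add, Walk.getVert_cons_succ]

lemma mem_support_takeW {u v x : V} (p : G.Walk u v) (n : ℕ) (hn : n ≤ p.length) :
    x ∈ (takeW p n).support ↔ ∃ i, i ≤ n ∧ p.getVert i = x := by
  rw [Walk.mem_support_iff_exists_getVert]
  constructor
  · rintro ⟨i, hx, hi⟩
    refine ⟨min i n, min_le_right _ _, ?_⟩
    rwa [getVert_takeW] at hx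
  · rintro ⟨i, hi, hx⟩
    refine ⟨i, ?_, by simp [hn, hi, Nat.le_min, le_trans hi hn]⟩
    rwa [getVert_takeW, min_eq_left hi]

lemma mem_support_drop {u v x : V} (p : G.Walk u v) (n : ℕ) (hn : n ≤ p.length) :
    x ∈ (p.drop n).support ↔ ∃ i, n ≤ i ∧ i ≤ p.length ∧ p.getVert i = x := by
  rw [Walk.mem_support_iff_exists_getVert]
  constructor
  · rintro ⟨i, hx, hi⟩
    exact ⟨n + i, Nat.le_add_right _ _, by rw [length_drop] at hi; omega, by rwa [getVert_drop] at hx⟩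
  · rintro ⟨i, hni, hil, hx⟩
    exact ⟨i - n, by rw [getVert_drop]; rwa [Nat.add_sub_cancel' hni], by simp; omega⟩


lemma isPath_takeW {u v : V} {p : G.Walk u v} (hp : p.IsPath) (n : ℕ) :
    (takeW p n).IsPath := by
  rw [isPath_iff_getVert_injOn]
  intro i hi j hj hij
  rw [length_takeW] at hi hj
  rw [getVert_takeW, getVert_takeW, min_eq_left (le_trans hi (min_le_left _ _)),
    min_eq_left (le_trans hj (min_le_left _ _))] at hij
  exact getVert_injOn_of_isPath hp i (le_trans hi (min_le_right _ _)) j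
    (le_trans hj (min_le_right _ _)) hij

lemma isPath_drop {u v : V} {p : G.Walk u v} (hp : p.IsPath) (n : ℕ) :
    (p.drop n).IsPath := by
  rw [isPath_iff_getVert_injOn]
  intro i hi j hj hij
  rw [length_drop] at hi hj
  by_cases hn : n ≤ p.length
  · rw [getVert_drop, getVert_drop] at hij
    have := getVert_injOn_of_isPath hp (n+i) (by omega) (n+j) (by omega) hij
    omega
  · omega

lemma no_diamond {G : SimpleGraph V} (hB : IsBlockGraph G) {x y u v : V}
    (hxy : G.Adj x y) (hxu : G.Adj x u) (hyu : G.Adj y u) (hxv : G.Adj x v) (hyv : G.Adj y v)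
    (huv : ¬ G.Adj u v) (hne : u ≠ v) : False :=
  hB.2 ⟨x, y, u, v, hxy.ne, hxu.ne, hxv.ne, hyu.ne, hyv.ne, hne, hxy, hxu, hyu, hxv, hyv, huv⟩

lemma merge_clique {G : SimpleGraph V} (hB : IsBlockGraph G) {K₁ K₂ : Set V}
    (h₁ : G.IsClique K₁) (h₂ : G.IsClique K₂) {x y : V}
    (hx1 : x ∈ K₁) (hx2 : x ∈ K₂) (hy1 : y ∈ K₁) (hy2 : y ∈ K₂) (hxy : G.Adj x y) :
    G.IsClique (K₁ ∪ K₂) := by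
  have key : ∀ u ∈ K₁, ∀ v ∈ K₂, u ≠ v → G.Adj u v := by
    intro u hu v hv hne
    by_cases hu2 : u ∈ K₂
    · exact h₂ hu2 hv hne
    by_cases hv1 : v ∈ K₁
    · exact h₁ hu hv1 hne
    have hux : u ≠ x := fun h => hu2 (h ▸ hx2)
    have huy : u ≠ y := fun h => hu2 (h ▸ hy2)
    have hvx : v ≠ x := fun h => hv1 (h ▸ hx1)
    have hvy : v ≠ y := fun h => hv1 (h ▸ hy1)
    by_contra huv
    exact no_diamond hB hxy (h₁ hx1 hu hux.symm) (h₁ hy1 hu huy.symm)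
      (h₂ hx2 hv hvx.symm) (h₂ hy2 hv hvy.symm) huv hne
  intro u hu v hv hne
  rcases hu with hu | hu <;> rcases hv with hv | hv
  · exact h₁ hu hv hne
  · exact key u hu v hv hne
  · exact (key v hv u hu hne.symm).symm
  · exact h₂ hu hv hne

end BG
section
variable {V : Type*} {G : SimpleGraph V}
open SimpleGraph Walk BG

theorem BG.chordless_contra (hB : IsBlockGraph G) {a b c : V} {p : G.Walk a b}
    (hp : p.IsPath) (hca : G.Adj c a) (hcb : G.Adj c b) (hcs : c ∉ p.support)
    (hn : 2 ≤ p.length)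
    (nocap : ∀ m, 1 ≤ m → m ≤ p.length - 1 → ¬ G.Adj c (p.getVert m))
    (nochord : ∀ i j, i + 2 ≤ j → j ≤ p.length → ¬ G.Adj (p.getVert i) (p.getVert j)) :
    False := by
  set n := p.length with hnp
  let W : G.Walk c b := Walk.cons hca p
  have hWl : W.length = n + 1 := by simp [W, hnp]
  have hWp : W.IsPath := hp.cons hcs
  haveI : NeZero (n+2) := ⟨by omega⟩
  have hg0 : W.getVert 0 = c := W.getVert_zero
  have hgs : ∀ m : ℕ, m ≠ 0 → W.getVert m = p.getVert (m-1) := fun m hm => getVert_cons p hca hm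
  have key : ∀ i j : ℕ, i < j → j ≤ n+1 →
      (G.Adj (W.getVert i) (W.getVert j) ↔ (j = i+1 ∨ (i = 0 ∧ j = n+1))) := by
    intro i j hij hj
    constructor
    · intro hadj
      by_contra hcon
      push_neg at hcon
      obtain ⟨h1, h2⟩ := hcon
      rcases Nat.eq_zero_or_pos i with rfl | hi
      · have hj2 : 2 ≤ j := by omega
        have h2' := h2 rfl
        have hjn : j ≤ n := by omega
        refine nocap (j-1) (by omega) (by omega) ?_
        rw [hg0, hgs j (by omega)] at hadj; exact hadj
      · refine nochord (i-1) (j-1) (by omega) (by omega) ?_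
        rw [hgs i (by omega), hgs j (by omega)] at hadj; exact hadj
    · rintro (rfl | ⟨rfl, rfl⟩)
      · exact W.adj_getVert_succ (by omega)
      · have : W.getVert (n+1) = b := by rw [← hWl]; exact W.getVert_length
        rw [hg0, this]; exact hcb
  have hinj : ∀ i j : ℕ, i ≤ n+1 → j ≤ n+1 → W.getVert i = W.getVert j → i = j := by
    intro i j hi hj h
    exact getVert_injOn_of_isPath hWp i (by omega) j (by omega) h
  set f : ZMod (n+2) → V := fun i => W.getVert i.val with hf
  have hvlt : ∀ i : ZMod (n+2), i.val ≤ n + 1 := fun i => by have := ZMod.val_lt i; omega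
  have hcast : ∀ i : ZMod (n+2), ((i.val : ℕ) : ZMod (n+2)) = i := fun i =>
    ZMod.natCast_rightInverse i
  refine hB.1 (n+2) (by omega) ⟨f, ?_, ?_⟩
  · intro i j hij
    have := hinj i.val j.val (hvlt i) (hvlt j) hij
    rw [← hcast i, ← hcast j, this]
  · have main : ∀ i j : ZMod (n+2), i.val < j.val → G.Adj (f i) (f j) → j = i + 1 ∨ i = j + 1 := by
      intro i j hij hadj
      rcases (key i.val j.val hij (hvlt j)).1 hadj with h | ⟨h0, h1⟩
      · left
        rw [← hcast j, h, Nat.cast_add, Nat.cast_one, hcast i]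
      · right
        have e1 : j + 1 = 0 := by
          rw [← hcast j, h1, show ((n+1 : ℕ) : ZMod (n+2)) + 1 = ((n+2 : ℕ) : ZMod (n+2)) by
            push_cast; ring, ZMod.natCast_self]
        rw [e1, ← hcast i, h0, Nat.cast_zero]
    intro i j
    constructor
    · intro hadj
      rcases lt_trichotomy i.val j.val with h | h | h
      · exact main i j h hadj
      · exfalso
        have : i = j := by rw [← hcast i, ← hcast j, h]
        exact hadj.ne (by rw [this])
      · rcases main j i h hadj.symm with h' | h'
        · exact Or.inr h'
        · exact Or.inl h'
    · have adjsucc : ∀ i : ZMod (n+2), G.Adj (f i) (f (i+1)) := by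
        intro i
        rcases Nat.lt_or_ge i.val (n+1) with hi | hi
        · have hval : (i+1).val = i.val + 1 := by
            have e : i + 1 = ((i.val + 1 : ℕ) : ZMod (n+2)) := by
              rw [Nat.cast_add, Nat.cast_one, hcast i]
            rw [e, ZMod.val_cast_of_lt (by omega)]
          show G.Adj (W.getVert i.val) (W.getVert (i+1).val)
          rw [hval]
          exact W.adj_getVert_succ (by omega)
        · have hi' : i.val = n+1 := by have := hvlt i; omega
          have h1 : i + 1 = 0 := by
            rw [← hcast i, hi', show ((n+1 : ℕ) : ZMod (n+2)) + 1 = ((n+2 : ℕ) : ZMod (n+2)) by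
              push_cast; ring]
            exact ZMod.natCast_self _
          show G.Adj (W.getVert i.val) (W.getVert (i+1).val)
          rw [h1, hi']
          have : W.getVert (n+1) = b := by rw [← hWl]; exact W.getVert_length
          rw [this]
          show G.Adj b (W.getVert (0 : ZMod (n+2)).val)
          rw [ZMod.val_zero, hg0]
          exact hcb.symm
      rintro (rfl | rfl)
      · exact adjsucc _
      · exact (adjsucc _).symm
end
section
variable {V : Type*} {G : SimpleGraph V}
open SimpleGraph Walk BG

theorem BG.cap_clique (hB : IsBlockGraph G) :
    ∀ n (a b c : V) (p : G.Walk a b), p.length = n → p.IsPath → G.Adj c a → G.Adj c b →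
      c ∉ p.support → G.IsClique (insert c {v | v ∈ p.support}) := by
  intro n
  induction n using Nat.strong_induction_on with
  | _ n IH =>
  intro a b c p hlen hp hca hcb hcs
  subst hlen
  rcases Nat.lt_or_ge p.length 2 with hn2 | hn2
  · -- base cases: length ≤ 1
    have hmem : ∀ v, v ∈ p.support → v = a ∨ v = b := by
      intro v hv
      obtain ⟨k, hgk, hkl⟩ := mem_support_iff_exists_getVert.1 hv
      rcases Nat.eq_zero_or_pos k with rfl | hk
      · left; rw [← hgk, p.getVert_zero]
      · right
        have hk1 : k = p.length := by omega
        rw [← hgk, hk1, p.getVert_length]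
    have hab : a ≠ b → G.Adj a b := by
      intro hne
      have hl : p.length = 1 := by
        rcases Nat.eq_zero_or_pos p.length with h0 | h1
        · exfalso
          apply hne
          have := p.getVert_length
          rw [h0, p.getVert_zero] at this
          exact this
        · omega
      have h := p.adj_getVert_succ (by omega : 0 < p.length)
      rwa [p.getVert_zero, show p.getVert 1 = b from by rw [← hl]; exact p.getVert_length] at h
    have hmem' : ∀ w, w ∈ insert c {v | v ∈ p.support} → w = c ∨ w = a ∨ w = b := by
      intro w hw
      rcases hw with rfl | hw
      · exact Or.inl rfl
      · exact Or.inr (hmem w hw)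
    intro u hu v hv hne
    have hac : a ≠ c := fun h => hcs (h ▸ p.start_mem_support)
    have hbc : b ≠ c := fun h => hcs (h ▸ p.end_mem_support)
    rcases hmem' u hu with rfl | rfl | rfl <;> rcases hmem' v hv with rfl | rfl | rfl
    · exact absurd rfl hne
    · exact hca
    · exact hcb
    · exact hca.symm
    · exact absurd rfl hne
    · exact hab hne
    · exact hcb.symm
    · exact (hab hne.symm).symm
    · exact absurd rfl hne
  · -- main case: length ≥ 2
    by_cases hA : ∃ m, 1 ≤ m ∧ m ≤ p.length - 1 ∧ G.Adj c (p.getVert m)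
    · obtain ⟨m, hm1, hm2, hcw⟩ := hA
      have hmn : m ≤ p.length := by omega
      have ht1 : (takeW p m).length = m := by rw [length_takeW]; omega
      have ht2 : (p.drop m).length = p.length - m := by rw [length_drop]
      have hK₁ : G.IsClique (insert c {v | v ∈ (takeW p m).support}) := by
        refine IH m (by omega) _ _ _ _ ht1 (isPath_takeW hp m) hca hcw ?_
        intro hmemc
        rw [mem_support_takeW _ _ hmn] at hmemc
        obtain ⟨i, him, hgi⟩ := hmemc
        exact hcs (mem_support_iff_exists_getVert.2 ⟨i, hgi, by omega⟩)
      have hK₂ : G.IsClique (insert c {v | v ∈ (p.drop m).support}) := by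
        refine IH (p.length - m) (by omega) _ _ _ _ ht2 (isPath_drop hp m) hcw hcb ?_
        intro hmemc
        rw [mem_support_drop _ _ hmn] at hmemc
        obtain ⟨i, _, hil, hgi⟩ := hmemc
        exact hcs (mem_support_iff_exists_getVert.2 ⟨i, hgi, hil⟩)
      have hmerge := merge_clique hB hK₁ hK₂ (x := c) (y := p.getVert m)
        (Set.mem_insert _ _)
        (Set.mem_insert _ _)
        (Set.mem_insert_of_mem _ (show p.getVert m ∈ {v | v ∈ (takeW p m).support} from
          (takeW p m).end_mem_support))
        (Set.mem_insert_of_mem _ (show p.getVert m ∈ {v | v ∈ (p.drop m).support} from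
          (p.drop m).start_mem_support))
        hcw
      refine hmerge.subset ?_
      intro v hv
      rcases hv with rfl | hv
      · exact Or.inl (Set.mem_insert _ _)
      · obtain ⟨i, hgi, hil⟩ := mem_support_iff_exists_getVert.1 hv
        rcases le_or_gt i m with him | him
        · exact Or.inl (Set.mem_insert_of_mem _ ((mem_support_takeW _ _ hmn).2 ⟨i, him, hgi⟩))
        · exact Or.inr (Set.mem_insert_of_mem _
            ((mem_support_drop _ _ hmn).2 ⟨i, by omega, hil, hgi⟩))
    · by_cases hBc : ∃ i j, i + 2 ≤ j ∧ j ≤ p.length ∧ G.Adj (p.getVert i) (p.getVert j)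
      · obtain ⟨i, j, hij, hjn, hchord⟩ := hBc
        have hil : i ≤ p.length := by omega
        have hp'path : (((takeW p i)).append (Walk.cons hchord (p.drop j))).IsPath := by
          rw [Walk.isPath_def, Walk.support_append, Walk.support_cons, List.tail_cons]
          rw [List.nodup_append]
          refine ⟨(isPath_takeW hp i).support_nodup, (isPath_drop hp j).support_nodup, ?_⟩
          intro v hv1 w hv2 hvw
          subst hvw
          rw [mem_support_takeW _ _ hil] at hv1
          rw [mem_support_drop _ _ (by omega)] at hv2
          obtain ⟨k, hk, hgk⟩ := hv1
          obtain ⟨l, hl1, hl2, hgl⟩ := hv2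
          have := getVert_injOn_of_isPath hp k (by omega) l (by omega) (by rw [hgk, hgl])
          omega
        have hp'len : (((takeW p i)).append (Walk.cons hchord (p.drop j))).length
            = i + 1 + (p.length - j) := by
          rw [Walk.length_append, Walk.length_cons, length_takeW, length_drop]
          omega
        have hsub' : ∀ v ∈ (((takeW p i)).append (Walk.cons hchord (p.drop j))).support,
            v ∈ p.support := by
          intro v hv
          rw [Walk.mem_support_append_iff] at hv
          rcases hv with hv | hv
          · rw [mem_support_takeW _ _ hil] at hv
            obtain ⟨k, hk, hgk⟩ := hv
            exact mem_support_iff_exists_getVert.2 ⟨k, hgk, by omega⟩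
          · rw [Walk.support_cons, List.mem_cons] at hv
            rcases hv with rfl | hv
            · exact mem_support_iff_exists_getVert.2 ⟨i, rfl, by omega⟩
            · rw [mem_support_drop _ _ (by omega)] at hv
              obtain ⟨l, hl1, hl2, hgl⟩ := hv
              exact mem_support_iff_exists_getVert.2 ⟨l, hgl, hl2⟩
        have hK₁ : G.IsClique (insert c
            {v | v ∈ (((takeW p i)).append (Walk.cons hchord (p.drop j))).support}) := by
          refine IH (i + 1 + (p.length - j)) (by omega) _ _ _ _ hp'len hp'path hca hcb ?_
          intro hcmem
          exact hcs (hsub' c hcmem)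
        -- middle walk
        have hMend : (p.drop i).getVert (j - i) = p.getVert j := by
          rw [getVert_drop]; congr 1; omega
        set M : G.Walk (p.getVert i) (p.getVert j) := (takeW (p.drop i) (j - i)).copy rfl hMend
          with hM
        have hMget : ∀ k, M.getVert k = p.getVert (i + min k (j - i)) := by
          intro k
          rw [hM, Walk.getVert_copy, getVert_takeW, getVert_drop]
        have hMlen : M.length = j - i := by
          rw [hM, Walk.length_copy, length_takeW, length_drop]
          omega
        have hMpath : M.IsPath := by
          rw [hM, Walk.isPath_copy]
          exact isPath_takeW (isPath_drop hp i) _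
        have hM1 : M.getVert 1 = p.getVert (i + 1) := by
          rw [hMget]; congr 1; omega
        have hadjx1 : G.Adj (p.getVert i) (M.getVert 1) := by
          rw [hM1]; exact p.adj_getVert_succ (by omega)
        have hM'len : (M.drop 1).length = j - i - 1 := by rw [length_drop, hMlen]
        have hxM' : p.getVert i ∉ (M.drop 1).support := by
          intro hmemx
          rw [mem_support_drop _ _ (by omega)] at hmemx
          obtain ⟨k, hk1, hk2, hgk⟩ := hmemx
          rw [hMget] at hgk
          have := getVert_injOn_of_isPath hp (i + min k (j-i)) (by omega) i (by omega) hgk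
          omega
        have hK₂ : G.IsClique (insert (p.getVert i) {v | v ∈ (M.drop 1).support}) := by
          refine IH (j - i - 1) (by omega) _ _ _ _ hM'len (isPath_drop hMpath 1)
            hadjx1 hchord hxM'
        have hxK₁ : p.getVert i ∈ insert c
            {v | v ∈ (((takeW p i)).append (Walk.cons hchord (p.drop j))).support} :=
          Set.mem_insert_of_mem _ (by
            rw [Set.mem_setOf_eq, Walk.mem_support_append_iff]
            exact Or.inl (takeW p i).end_mem_support)
        have hyK₁ : p.getVert j ∈ insert c
            {v | v ∈ (((takeW p i)).append (Walk.cons hchord (p.drop j))).support} :=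
          Set.mem_insert_of_mem _ (by
            rw [Set.mem_setOf_eq, Walk.mem_support_append_iff, Walk.support_cons]
            exact Or.inr (List.mem_cons_of_mem _ (p.drop j).start_mem_support))
        have hmerge := merge_clique hB hK₁ hK₂ (x := p.getVert i) (y := p.getVert j)
          hxK₁ (Set.mem_insert _ _) hyK₁
          (Set.mem_insert_of_mem _ (show p.getVert j ∈ {v | v ∈ (M.drop 1).support} from by
            have := (M.drop 1).end_mem_support
            exact this))
          hchord
        refine hmerge.subset ?_
        intro v hv
        rcases hv with rfl | hv
        · exact Or.inl (Set.mem_insert _ _)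
        · obtain ⟨k, hgk, hkl⟩ := mem_support_iff_exists_getVert.1 hv
          rcases le_or_gt k i with hki | hki
          · refine Or.inl (Set.mem_insert_of_mem _ ?_)
            rw [Set.mem_setOf_eq, Walk.mem_support_append_iff]
            exact Or.inl ((mem_support_takeW _ _ hil).2 ⟨k, hki, hgk⟩)
          · rcases le_or_gt j k with hkj | hkj
            · refine Or.inl (Set.mem_insert_of_mem _ ?_)
              rw [Set.mem_setOf_eq, Walk.mem_support_append_iff, Walk.support_cons]
              exact Or.inr (List.mem_cons_of_mem _
                ((mem_support_drop _ _ (by omega)).2 ⟨k, hkj, hkl, hgk⟩))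
            · refine Or.inr (Set.mem_insert_of_mem _ ?_)
              rw [Set.mem_setOf_eq, mem_support_drop _ _ (by omega : 1 ≤ M.length)]
              refine ⟨k - i, by omega, by omega, ?_⟩
              rw [hMget, ← hgk]
              congr 1
              omega
      · -- chordless: contradiction
        exfalso
        push_neg at hA hBc
        exact BG.chordless_contra hB hp hca hcb hcs hn2
          (fun m h1 h2 => hA m h1 h2)
          (fun i j h1 h2 => hBc i j h1 h2)

theorem BG.ends_adj_clique (hB : IsBlockGraph G) {a b : V} (W : G.Walk a b)
    (hW : W.IsPath) (hab : G.Adj a b) : G.IsClique {v | v ∈ W.support} := by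
  cases W with
  | nil => exact absurd rfl hab.ne
  | cons h q =>
    have hq : q.IsPath := hW.of_cons
    have ha : a ∉ q.support := by
      have := hW
      rw [Walk.cons_isPath_iff] at this
      exact this.2
    have := BG.cap_clique hB q.length _ b a q rfl hq h hab ha
    refine this.subset ?_
    intro v hv
    rw [Set.mem_setOf_eq, Walk.support_cons, List.mem_cons] at hv
    rcases hv with rfl | hv
    · exact Set.mem_insert _ _
    · exact Set.mem_insert_of_mem _ hv
end
section
variable {V : Type*} {G : SimpleGraph V}
open SimpleGraph Walk BG

lemma BG.walk_dist_decomp [DecidableEq V] (hc : G.Connected) {r x v : V} (P : G.Walk r x)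
    (hP : P.length = G.dist r x) (hv : v ∈ P.support) :
    G.dist r v + G.dist v x = G.dist r x ∧
    G.dist r v = (P.takeUntil v hv).length ∧ G.dist v x = (P.dropUntil v hv).length := by
  have hsplit := P.take_spec hv
  have hlen : (P.takeUntil v hv).length + (P.dropUntil v hv).length = P.length := by
    rw [← Walk.length_append, hsplit]
  have h1 : G.dist r v ≤ (P.takeUntil v hv).length := SimpleGraph.dist_le _
  have h2 : G.dist v x ≤ (P.dropUntil v hv).length := SimpleGraph.dist_le _
  have h3 : G.dist r x ≤ G.dist r v + G.dist v x := hc.dist_triangle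
  omega

lemma BG.shortest_isPath {r x : V} (P : G.Walk r x) (hP : P.length = G.dist r x) :
    P.IsPath := by
  rw [isPath_iff_getVert_injOn]
  have aux : ∀ i j, i < j → j ≤ P.length → P.getVert i = P.getVert j → False := by
    intro i j hij hj hgij
    have := SimpleGraph.dist_le ((takeW P i).append ((P.drop j).copy hgij.symm rfl))
    rw [Walk.length_append, Walk.length_copy, length_takeW, length_drop] at this
    omega
  intro i hi j hj hij
  rcases lt_trichotomy i j with h | h | h
  · exact (aux i j h hj hij).elim
  · exact h
  · exact (aux j i h hi hij.symm).elim

lemma BG.shortest_dist_injOn [DecidableEq V] (hc : G.Connected) {r x : V} (P : G.Walk r x)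
    (hP : P.length = G.dist r x) :
    ∀ u ∈ P.support, ∀ v ∈ P.support, G.dist r u = G.dist r v → u = v := by
  intro u hu v hv huv
  obtain ⟨hsum_u, htake_u, hdrop_u⟩ := walk_dist_decomp hc P hP hu
  have hv' : v ∈ (P.takeUntil u hu).support ∨ v ∈ (P.dropUntil u hu).support := by
    rw [← Walk.mem_support_append_iff, P.take_spec hu]; exact hv
  rcases hv' with hvt | hvd
  · obtain ⟨hs, _, _⟩ := walk_dist_decomp hc (P.takeUntil u hu) htake_u.symm hvt
    have h0 : G.dist v u = 0 := by omega
    exact ((hc.preconnected v u).dist_eq_zero_iff.mp h0).symm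
  · obtain ⟨hs, _, _⟩ := walk_dist_decomp hc (P.dropUntil u hu) hdrop_u.symm hvd
    obtain ⟨hsum_v, _, _⟩ := walk_dist_decomp hc P hP hv
    have h0 : G.dist u v = 0 := by omega
    exact ((hc.preconnected u v).dist_eq_zero_iff.mp h0)

lemma BG.exists_parent (hc : G.Connected) {r x : V} (hx : x ≠ r) :
    ∃ p, G.Adj x p ∧ G.dist r p + 1 = G.dist r x := by
  obtain ⟨P, hP⟩ := hc.exists_walk_length_eq_dist r x
  have hk : 1 ≤ G.dist r x := hc.pos_dist_of_ne (Ne.symm hx)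
  obtain ⟨p, hadj, Pt, hPt⟩ := Walk.exists_eq_cons_of_ne hx P.reverse
  have hlenPt : Pt.length + 1 = G.dist r x := by
    have := congrArg Walk.length hPt
    rw [Walk.length_reverse, Walk.length_cons] at this
    omega
  have h1 : G.dist r p ≤ Pt.length := by
    have := SimpleGraph.dist_le Pt.reverse
    rwa [Walk.length_reverse] at this
  have h2 : G.dist r x ≤ G.dist r p + 1 := by
    have htri : G.dist r x ≤ G.dist r p + G.dist p x := hc.dist_triangle
    have hpx : G.dist p x ≤ 1 := by
      have := SimpleGraph.dist_le (Walk.cons hadj.symm Walk.nil)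
      simpa using this
    omega
  exact ⟨p, hadj, by omega⟩

lemma BG.exists_splice {w r : V} (Q : G.Walk w r) :
    ∀ n {u : V} (P : G.Walk u r), P.length = n → P.IsPath →
    ∃ (z : V) (A : G.Walk u z), A.IsPath ∧ z ∈ Q.support ∧
      (∀ t ∈ A.support, t ∈ P.support) ∧ (∀ t ∈ A.support, t ≠ z → t ∉ Q.support) := by
  intro n
  induction n using Nat.strong_induction_on with
  | _ n IH =>
  intro u P hlen hP
  by_cases hu : u ∈ Q.support
  · refine ⟨u, Walk.nil, by simp, hu, ?_, ?_⟩
    · intro t ht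
      simp only [Walk.support_nil, List.mem_singleton] at ht
      exact ht ▸ P.start_mem_support
    · intro t ht htz
      simp only [Walk.support_nil, List.mem_singleton] at ht
      exact absurd ht htz
  · have hur : u ≠ r := fun h => hu (h ▸ Q.end_mem_support)
    obtain ⟨u', h, P', hPeq⟩ := Walk.exists_eq_cons_of_ne hur P
    have hPc : (Walk.cons h P').IsPath := hPeq ▸ hP
    have hP' : P'.IsPath := hPc.of_cons
    have hlen' : P'.length < n := by
      have := congrArg Walk.length hPeq
      rw [Walk.length_cons] at this
      omega
    obtain ⟨z, A', hA'p, hz, hsub, hmin⟩ := IH P'.length hlen' P' rfl hP'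
    have hu' : u ∉ A'.support := by
      intro hmem
      exact ((Walk.cons_isPath_iff h P').1 hPc).2 (hsub u hmem)
    refine ⟨z, Walk.cons h A', hA'p.cons hu', hz, ?_, ?_⟩
    · intro t ht
      rw [Walk.support_cons, List.mem_cons] at ht
      rw [hPeq, Walk.support_cons, List.mem_cons]
      rcases ht with rfl | ht
      · exact Or.inl rfl
      · exact Or.inr (hsub t ht)
    · intro t ht htz
      rw [Walk.support_cons, List.mem_cons] at ht
      rcases ht with rfl | ht
      · exact hu
      · exact hmin t ht htz
end
section
variable {V : Type*} {G : SimpleGraph V}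
open SimpleGraph Walk BG

theorem BG.parents_eq (hB : IsBlockGraph G) (hc : G.Connected) {r x y p q : V}
    (hxy : x = y ∨ G.Adj x y) (hky : G.dist r y = G.dist r x)
    (hpx : G.Adj x p) (hpl : G.dist r p + 1 = G.dist r x)
    (hqy : G.Adj y q) (hql : G.dist r q + 1 = G.dist r x) : p = q := by
  classical
  by_contra hpq
  set k := G.dist r x with hk
  have hk1 : 1 ≤ k := by omega
  obtain ⟨Rp, hRp⟩ := hc.exists_walk_length_eq_dist r p
  obtain ⟨Rq, hRq⟩ := hc.exists_walk_length_eq_dist r q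
  have hRpPath : Rp.IsPath := shortest_isPath Rp hRp
  have hRqPath : Rq.IsPath := shortest_isPath Rq hRq
  have hPlev : ∀ v ∈ Rp.support, G.dist r v + G.dist v p = k - 1 := by
    intro v hv
    have := (walk_dist_decomp hc Rp hRp hv).1
    omega
  have hQlev : ∀ v ∈ Rq.support, G.dist r v + G.dist v q = k - 1 := by
    intro v hv
    have := (walk_dist_decomp hc Rq hRq hv).1
    omega
  have hPuniq : ∀ v ∈ Rp.support, G.dist r v = k - 1 → v = p := by
    intro v hv hl
    have h1 := hPlev v hv
    have h0 : G.dist v p = 0 := by omega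
    exact (hc.preconnected v p).dist_eq_zero_iff.mp h0
  have hQuniq : ∀ v ∈ Rq.support, G.dist r v = k - 1 → v = q := by
    intro v hv hl
    have h1 := hQlev v hv
    have h0 : G.dist v q = 0 := by omega
    exact (hc.preconnected v q).dist_eq_zero_iff.mp h0
  have hxP : x ∉ Rp.support := fun h => by have := hPlev x h; omega
  have hyP : y ∉ Rp.support := fun h => by have := hPlev y h; rw [hky] at this; omega
  have hxQ : x ∉ Rq.support := fun h => by have := hQlev x h; omega
  have hyQ : y ∉ Rq.support := fun h => by have := hQlev y h; rw [hky] at this; omega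
  have hqP : q ∉ Rp.support := fun h => hpq ((hPuniq q h (by omega)).symm)
  have hpQ : p ∉ Rq.support := fun h => hpq (hQuniq p h (by omega))
  obtain ⟨z, A, hApath, hzQ, hAsub, hAmin⟩ :=
    exists_splice Rq.reverse Rp.reverse.length Rp.reverse rfl hRpPath.reverse
  have hzQs : z ∈ Rq.support := by rwa [Walk.support_reverse, List.mem_reverse] at hzQ
  have hAsubP : ∀ t ∈ A.support, t ∈ Rp.support := by
    intro t ht
    have := hAsub t ht
    rwa [Walk.support_reverse, List.mem_reverse] at this
  have hAminQ : ∀ t ∈ A.support, t ≠ z → t ∉ Rq.support := by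
    intro t ht htz hmem
    exact hAmin t ht htz (by rwa [Walk.support_reverse, List.mem_reverse])
  have hzp : z ≠ p := fun h => hpQ (h ▸ hzQs)
  have hzA : z ∈ Rp.support := hAsubP z A.end_mem_support
  have hzq : z ≠ q := fun h => hqP (h ▸ hzA)
  have hzlev : G.dist r z + 2 ≤ k := by
    have h1 := hPlev z hzA
    have h2 : G.dist r z ≠ k - 1 := fun h => hzp (hPuniq z hzA h)
    omega
  set Bw : G.Walk q z := Rq.reverse.takeUntil z hzQ with hBwdef
  have hBpath : Bw.IsPath := hRqPath.reverse.takeUntil hzQ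
  have hBsub : ∀ t ∈ Bw.support, t ∈ Rq.support := by
    intro t ht
    have := Rq.reverse.support_takeUntil_subset hzQ ht
    rwa [Walk.support_reverse, List.mem_reverse] at this
  obtain ⟨b₁, hzb₁, Tb, hTb⟩ := Walk.exists_eq_cons_of_ne (Ne.symm hzq).symm Bw.reverse
  have hBrevPath : (Walk.cons hzb₁ Tb).IsPath := hTb ▸ hBpath.reverse
  have hTbPath : Tb.IsPath := hBrevPath.of_cons
  have hzTb : z ∉ Tb.support := ((Walk.cons_isPath_iff _ _).1 hBrevPath).2
  have hTbsub : ∀ t ∈ Tb.support, t ∈ Rq.support := by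
    intro t ht
    refine hBsub t ?_
    have : t ∈ Bw.reverse.support := by
      rw [hTb, Walk.support_cons, List.mem_cons]
      exact Or.inr ht
    rwa [Walk.support_reverse, List.mem_reverse] at this
  -- final contradiction helper
  have final : ∀ (W : G.Walk z b₁), W.IsPath → x ∈ W.support → False := by
    intro W hWpath hxW
    have hcl := ends_adj_clique hB W hWpath hzb₁
    have hzx : z ≠ x := fun h => by rw [h] at hzlev; omega
    have hadjzx := hcl W.start_mem_support hxW hzx
    have h1 : G.dist r x ≤ G.dist r z + 1 := by
      have htri : G.dist r x ≤ G.dist r z + G.dist z x := hc.dist_triangle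
      have : G.dist z x ≤ 1 := by
        have := SimpleGraph.dist_le (Walk.cons hadjzx Walk.nil)
        simpa using this
      omega
    omega
  have hArevSupp : ∀ t, t ∈ A.reverse.support ↔ t ∈ A.support := by
    intro t; rw [Walk.support_reverse, List.mem_reverse]
  have hTbRevSupp : ∀ t, t ∈ Tb.reverse.support ↔ t ∈ Tb.support := by
    intro t; rw [Walk.support_reverse, List.mem_reverse]
  have hxA : x ∉ A.support := fun h => hxP (hAsubP x h)
  have hyA : y ∉ A.support := fun h => hyP (hAsubP y h)
  have hxTb : x ∉ Tb.support := fun h => hxQ (hTbsub x h)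
  have hyTb : y ∉ Tb.support := fun h => hyQ (hTbsub y h)
  have hdisj : ∀ t ∈ A.support, t ∉ Tb.support := by
    intro t ht hmem
    by_cases htz : t = z
    · exact hzTb (htz ▸ hmem)
    · exact hAminQ t ht htz (hTbsub t hmem)
  rcases hxy with rfl | hadjxy
  · -- x = y
    set E : G.Walk p b₁ := Walk.cons hpx.symm (Walk.cons hqy Tb.reverse) with hE
    set W : G.Walk z b₁ := A.reverse.append E with hW
    have hWpath : W.IsPath := by
      rw [Walk.isPath_def, hW, Walk.support_append, hE, Walk.support_cons, Walk.support_cons,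
        List.tail_cons, Walk.support_reverse, List.nodup_append]
      refine ⟨by rw [List.nodup_reverse]; exact hApath.support_nodup, ?_, ?_⟩
      · rw [List.nodup_cons]
        exact ⟨fun h => hxTb ((hTbRevSupp x).1 h), hTbPath.reverse.support_nodup⟩
      · intro t ht t' htmem htt
        subst htt
        rw [List.mem_reverse] at ht
        rw [List.mem_cons] at htmem
        rcases htmem with rfl | htmem
        · exact hxA ht
        · exact hdisj t ht ((hTbRevSupp t).1 htmem)
    refine final W hWpath ?_
    rw [hW, Walk.mem_support_append_iff]
    right
    rw [hE, Walk.support_cons, Walk.support_cons]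
    exact List.mem_cons_of_mem _ List.mem_cons_self
  · -- x ≠ y, adjacent
    set E : G.Walk p b₁ := Walk.cons hpx.symm (Walk.cons hadjxy (Walk.cons hqy Tb.reverse))
      with hE
    set W : G.Walk z b₁ := A.reverse.append E with hW
    have hWpath : W.IsPath := by
      rw [Walk.isPath_def, hW, Walk.support_append, hE, Walk.support_cons, Walk.support_cons,
        Walk.support_cons, List.tail_cons, Walk.support_reverse, List.nodup_append]
      refine ⟨by rw [List.nodup_reverse]; exact hApath.support_nodup, ?_, ?_⟩
      · rw [List.nodup_cons, List.nodup_cons]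
        refine ⟨?_, fun h => hyTb ((hTbRevSupp y).1 h), hTbPath.reverse.support_nodup⟩
        rw [List.mem_cons]
        push_neg
        exact ⟨hadjxy.ne, fun h => hxTb ((hTbRevSupp x).1 h)⟩
      · intro t ht t' htmem htt
        subst htt
        rw [List.mem_reverse] at ht
        rw [List.mem_cons, List.mem_cons] at htmem
        rcases htmem with rfl | rfl | htmem
        · exact hxA ht
        · exact hyA ht
        · exact hdisj t ht ((hTbRevSupp t).1 htmem)
    refine final W hWpath ?_
    rw [hW, Walk.mem_support_append_iff]
    right
    rw [hE, Walk.support_cons, Walk.support_cons]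
    exact List.mem_cons_of_mem _ List.mem_cons_self
end
section
variable {V : Type*} {G : SimpleGraph V}
open SimpleGraph Walk BG

lemma BG.exists_maxclique [Fintype V] {s : Set V} (hs : G.IsClique s) :
    ∃ S : Set V, (G.IsClique S ∧ ∀ t, G.IsClique t → S ⊆ t → S = t) ∧ s ⊆ S := by
  obtain ⟨S, hST, hmax⟩ := Set.Finite.exists_maximalFor (fun t => t.ncard)
    {t : Set V | G.IsClique t ∧ s ⊆ t} (Set.toFinite _) ⟨s, hs, subset_rfl⟩
  refine ⟨S, ⟨hST.1, ?_⟩, hST.2⟩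
  intro t ht hsub
  have h1 : t ∈ {t : Set V | G.IsClique t ∧ s ⊆ t} := ⟨ht, hST.2.trans hsub⟩
  have h2 : S.ncard ≤ t.ncard := Set.ncard_le_ncard hsub (Set.toFinite t)
  exact Set.eq_of_subset_of_ncard_le hsub ((hmax h1 h2)) (Set.toFinite t)

lemma BG.maxclique_nonadj {S : Set V}
    (hS : G.IsClique S ∧ ∀ t, G.IsClique t → S ⊆ t → S = t) {a : V} (ha : a ∉ S) :
    ∃ b ∈ S, b ≠ a ∧ ¬ G.Adj a b := by
  by_contra hnb
  push_neg at hnb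
  have hclique : G.IsClique (insert a S) := by
    intro u hu v hv huv
    rcases hu with rfl | hu <;> rcases hv with rfl | hv
    · exact absurd rfl huv
    · exact hnb v hv (Ne.symm huv)
    · exact (hnb u hu huv).symm
    · exact hS.1 hu hv huv
  have := hS.2 (insert a S) hclique (Set.subset_insert _ _)
  exact ha (this ▸ Set.mem_insert _ _)

lemma BG.maxclique_inter (hB : IsBlockGraph G) {S T : Set V}
    (hS : G.IsClique S ∧ ∀ t, G.IsClique t → S ⊆ t → S = t)
    (hT : G.IsClique T ∧ ∀ t, G.IsClique t → T ⊆ t → T = t)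
    (hne : S ≠ T) {x y : V} (hxS : x ∈ S) (hxT : x ∈ T) (hyS : y ∈ S) (hyT : y ∈ T) :
    x = y := by
  by_contra hxy
  have hST : ¬ S ⊆ T := fun h => hne (hS.2 T hT.1 h)
  obtain ⟨a, haS, haT⟩ := Set.not_subset.1 hST
  obtain ⟨b, hbT, hba, hnadj⟩ := BG.maxclique_nonadj hT haT
  have hbS : b ∉ S := fun h => hnadj (hS.1 haS h (Ne.symm hba))
  have hxa : x ≠ a := fun h => haT (h ▸ hxT)
  have hya : y ≠ a := fun h => haT (h ▸ hyT)
  have hxb : x ≠ b := fun h => hbS (h ▸ hxS)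
  have hyb : y ≠ b := fun h => hbS (h ▸ hyS)
  exact no_diamond hB (hS.1 hxS hyS hxy) (hS.1 hxS haS hxa) (hS.1 hyS haS hya)
    (hT.1 hxT hbT hxb) (hT.1 hyT hbT hyb) hnadj (Ne.symm hba)

lemma BG.gate_spec [Fintype V] (hB : IsBlockGraph G) (hc : G.Connected) (r : V) {S : Set V}
    (hS : G.IsClique S ∧ ∀ t, G.IsClique t → S ⊆ t → S = t) :
    ∃ g ∈ S, ∀ x ∈ S, x ≠ g → G.dist r g < G.dist r x := by
  have hne : S.Nonempty := by
    by_contra h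
    rw [Set.not_nonempty_iff_eq_empty] at h
    subst h
    have h1 : G.IsClique {r} := SimpleGraph.isClique_singleton r
    have := hS.2 {r} h1 (Set.empty_subset _)
    exact (Set.singleton_ne_empty r) this.symm
  obtain ⟨g, hgS, hgmin⟩ := Set.exists_min_image S (fun v => G.dist r v) (Set.toFinite S) hne
  refine ⟨g, hgS, ?_⟩
  intro x hxS hxg
  rcases lt_or_ge (G.dist r g) (G.dist r x) with h | h
  · exact h
  exfalso
  have heq : G.dist r x = G.dist r g := le_antisymm h (hgmin x hxS)
  rcases Nat.eq_zero_or_pos (G.dist r g) with hk0 | hk1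
  · have hg0 : g = r := (hc.dist_eq_zero_iff.mp hk0).symm
    have hx0 : x = r := (hc.dist_eq_zero_iff.mp (by omega : G.dist r x = 0)).symm
    exact hxg (hx0.trans hg0.symm)
  · have hxr : x ≠ r := by
      intro h'
      rw [h', SimpleGraph.dist_self] at heq
      omega
    have hgr : g ≠ r := by
      intro h'
      rw [h', SimpleGraph.dist_self] at hk1
      omega
    obtain ⟨p, hpx, hpl⟩ := exists_parent hc hxr
    obtain ⟨q, hqg, hql⟩ := exists_parent hc hgr
    have hadj : G.Adj x g := hS.1 hxS hgS hxg
    have hpq : p = q := parents_eq hB hc (Or.inr hadj) heq.symm hpx hpl hqg (by omega)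
    subst hpq
    have hpS : p ∉ S := by
      intro hmem
      have := hgmin p hmem
      omega
    obtain ⟨z, hzS, hzp, hznadj⟩ := BG.maxclique_nonadj hS hpS
    have hzx : z ≠ x := fun h => hznadj (h ▸ hpx.symm)
    have hzg : z ≠ g := fun h => hznadj (h ▸ hqg.symm)
    exact no_diamond hB hadj hpx hqg (hS.1 hxS hzS (Ne.symm hzx)) (hS.1 hgS hzS (Ne.symm hzg))
      hznadj (Ne.symm hzp)
end

end AuxBG

open SimpleGraph Walk

/-- For every finite connected identifiable block graph `G`,
`|V(G)| ≤ 2 n_Q(G) - 1`. -/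
theorem card_le_two_nQ_sub_one {V : Type*} [Fintype V] (G : SimpleGraph V)
    (hB : IsBlockGraph G) (hc : G.Connected) (hI : Identifiable G) :
    Fintype.card V ≤ 2 * nQ G - 1 := by
  classical
  obtain ⟨r⟩ := hc.nonempty
  set M : Set (Set V) := {s : Set V | G.IsClique s ∧ ∀ t : Set V, G.IsClique t → s ⊆ t → s = t}
    with hMdef
  have hQdef : nQ G = M.ncard := rfl
  have hvc : ∀ v : V, ∃ S, S ∈ M ∧ v ∈ S := by
    intro v
    obtain ⟨S, hS, hsub⟩ :=
      BG.exists_maxclique (G := G) (s := {v}) (SimpleGraph.isClique_singleton v)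
    exact ⟨S, hS, hsub rfl⟩
  have gate_ex : ∀ S : Set V, ∃ g, S ∈ M →
      g ∈ S ∧ ∀ x ∈ S, x ≠ g → G.dist r g < G.dist r x := by
    intro S
    by_cases hS : S ∈ M
    · obtain ⟨g, h1, h2⟩ := BG.gate_spec hB hc r hS
      exact ⟨g, fun _ => ⟨h1, h2⟩⟩
    · exact ⟨r, fun h => absurd h hS⟩
  choose gate hgate using gate_ex
  have hgate₁ : ∀ S, S ∈ M → gate S ∈ S := fun S hS => (hgate S hS).1
  have hgate₂ : ∀ S, S ∈ M → ∀ x ∈ S, x ≠ gate S → G.dist r (gate S) < G.dist r x :=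
    fun S hS => (hgate S hS).2
  have hgp : ∀ S, S ∈ M → ∀ v ∈ S, v ≠ gate S →
      G.Adj v (gate S) ∧ G.dist r (gate S) + 1 = G.dist r v := by
    intro S hS v hv hne
    have hadj : G.Adj v (gate S) := hS.1 hv (hgate₁ S hS) hne
    refine ⟨hadj, ?_⟩
    have h1 : G.dist r (gate S) < G.dist r v := hgate₂ S hS v hv hne
    have h2 : G.dist r v ≤ G.dist r (gate S) + 1 := by
      have htri : G.dist r v ≤ G.dist r (gate S) + G.dist (gate S) v := hc.dist_triangle
      have : G.dist (gate S) v ≤ 1 := by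
        have := SimpleGraph.dist_le (Walk.cons hadj.symm Walk.nil)
        simpa using this
      omega
    omega
  set cut : Set V := {v | ∃ S T, S ∈ M ∧ T ∈ M ∧ S ≠ T ∧ v ∈ S ∧ v ∈ T} with hcutdef
  have hown : ∀ v : V, ∃ S, v ∈ cut → S ∈ M ∧ v ∈ S ∧ gate S = v := by
    intro v
    by_cases hv : v ∈ cut
    · obtain ⟨S, T, hS, hT, hST, hvS, hvT⟩ := hv
      by_contra hno
      push_neg at hno
      have hno' : ∀ S, S ∈ M → v ∈ S → gate S ≠ v := by
        intro S' hS' hvS' heq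
        exact (hno S').2 hS' hvS' heq
      have hgS : gate S ≠ v := hno' S hS hvS
      have hgT : gate T ≠ v := hno' T hT hvT
      obtain ⟨hadjS, hlS⟩ := hgp S hS v hvS (Ne.symm hgS)
      obtain ⟨hadjT, hlT⟩ := hgp T hT v hvT (Ne.symm hgT)
      have hge : gate S = gate T :=
        BG.parents_eq hB hc (Or.inl rfl) rfl hadjS hlS hadjT hlT
      exact hgS (BG.maxclique_inter hB hS hT hST (hgate₁ S hS) (hge ▸ hgate₁ T hT) hvS hvT)
    · exact ⟨∅, fun h => absurd h hv⟩
  choose own hownspec using hown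
  have hownM : ∀ v ∈ cut, own v ∈ M := fun v hv => (hownspec v hv).1
  have howng : ∀ v ∈ cut, gate (own v) = v := fun v hv => (hownspec v hv).2.2
  have hinj : Set.InjOn own cut := by
    intro u hu v hv heq
    rw [← howng u hu, ← howng v hv, heq]
  have gate_r : ∀ S, S ∈ M → r ∈ S → gate S = r := by
    intro S hS hrS
    by_contra h
    have := hgate₂ S hS r hrS (Ne.symm h)
    rw [SimpleGraph.dist_self] at this
    omega
  have hmiss : ∃ S₁, S₁ ∈ M ∧ ∀ v ∈ cut, own v ≠ S₁ := by
    by_cases hr : r ∈ cut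
    · obtain ⟨S, T, hS, hT, hST, hrS, hrT⟩ := hr
      by_cases hoS : own r = S
      · refine ⟨T, hT, ?_⟩
        intro v hv heq
        have hvr : v = r := by rw [← howng v hv, heq]; exact gate_r T hT hrT
        subst hvr
        rw [heq] at hoS
        exact hST hoS.symm
      · refine ⟨S, hS, ?_⟩
        intro v hv heq
        have hvr : v = r := by rw [← howng v hv, heq]; exact gate_r S hS hrS
        subst hvr
        exact hoS heq
    · obtain ⟨S, hS, hrS⟩ := hvc r
      refine ⟨S, hS, ?_⟩
      intro v hv heq
      have hvr : v = r := by rw [← howng v hv, heq]; exact gate_r S hS hrS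
      subst hvr
      exact hr hv
  obtain ⟨S₁, hS₁M, hS₁miss⟩ := hmiss
  have hcutcard : cut.ncard ≤ M.ncard - 1 := by
    have hsub : own '' cut ⊆ M \ {S₁} := by
      rintro _ ⟨v, hv, rfl⟩
      exact ⟨hownM v hv, fun h => hS₁miss v hv h⟩
    calc cut.ncard = (own '' cut).ncard := (Set.ncard_image_of_injOn hinj).symm
      _ ≤ (M \ {S₁}).ncard := Set.ncard_le_ncard hsub (Set.toFinite _)
      _ = M.ncard - 1 := Set.ncard_diff_singleton_of_mem hS₁M
  set fp : V → Set V := fun v => (hvc v).choose with hfp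
  have hfpM : ∀ v, fp v ∈ M := fun v => (hvc v).choose_spec.1
  have hfpv : ∀ v, v ∈ fp v := fun v => (hvc v).choose_spec.2
  have hkey : ∀ w, w ∉ cut → closedNbhd G w = fp w := by
    intro w hw
    ext t
    constructor
    · intro ht
      rw [closedNbhd, Set.mem_insert_iff] at ht
      rcases ht with rfl | ht
      · exact hfpv t
      · have hadj : G.Adj w t := ht
        have hpair : G.IsClique {w, t} := SimpleGraph.isClique_pair.2 (fun _ => hadj)
        obtain ⟨S', hS', hsub⟩ := BG.exists_maxclique hpair
        have hwS' : w ∈ S' := hsub (Set.mem_insert _ _)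
        have heqS : S' = fp w := by
          by_contra hne
          exact hw ⟨S', fp w, hS', hfpM w, hne, hwS', hfpv w⟩
        exact heqS ▸ hsub (Set.mem_insert_of_mem _ rfl)
    · intro ht
      rw [closedNbhd, Set.mem_insert_iff]
      by_cases htw : t = w
      · exact Or.inl htw
      · exact Or.inr ((hfpM w).1 (hfpv w) ht (Ne.symm htw))
  have hprivinj : Set.InjOn fp cutᶜ := by
    intro u hu v hv heq
    by_contra hne
    exact hI u v hne (by rw [hkey u hu, hkey v hv, heq])
  have hprivcard : (cutᶜ : Set V).ncard ≤ M.ncard := by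
    have hsub : fp '' cutᶜ ⊆ M := by rintro _ ⟨v, _, rfl⟩; exact hfpM v
    calc (cutᶜ : Set V).ncard = (fp '' cutᶜ).ncard := (Set.ncard_image_of_injOn hprivinj).symm
      _ ≤ M.ncard := Set.ncard_le_ncard hsub (Set.toFinite _)
  have hQ1 : 1 ≤ M.ncard := by
    obtain ⟨S, hS, _⟩ := hvc r
    exact (Set.ncard_pos (Set.toFinite M)).2 ⟨S, hS⟩
  have hcard : Fintype.card V ≤ (cutᶜ : Set V).ncard + cut.ncard := by
    have h1 : (Set.univ : Set V).ncard = Fintype.card V := by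
      rw [Set.ncard_univ, Nat.card_eq_fintype_card]
    rw [← h1, ← Set.compl_union_self cut]
    exact Set.ncard_union_le _ _
  rw [hQdef]
  omega
end

section
/- Let G be a finite identifiable graph (i.e., no two distinct vertices have the same closed neighborhood). Then γ^ID(G) ≤ 2·γ^LD(G). -/
open SimpleGraph

variable {V : Type*}

lemma id_aux {V : Type*} [Fintype V] [DecidableEq (Set V)] (G : SimpleGraph V)
    (hI : Identifiable G) (n : ℕ) :
    ∀ D : Set V, (∀ u, (closedNbhd G u ∩ D).Nonempty) →
      Fintype.card V ≤ n + (Finset.univ.image (fun u => closedNbhd G u ∩ D)).card →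
      ∃ E : Set V, IsIdCode G E ∧ E.ncard ≤ D.ncard + n := by
  induction n with
  | zero =>
    intro D hdom hcard
    by_cases hinj : ∀ u v : V, u ≠ v → closedNbhd G u ∩ D ≠ closedNbhd G v ∩ D
    · exact ⟨D, ⟨hdom, hinj⟩, by simp⟩
    · exfalso
      push_neg at hinj
      obtain ⟨u, v, huv, heq⟩ := hinj
      have hle : (Finset.univ.image (fun u => closedNbhd G u ∩ D)).card ≤
          Finset.univ.card := Finset.card_image_le
      rcases lt_or_eq_of_le hle with h | h
      · simp only [Finset.card_univ] at h
        omega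
      · have hio := Finset.injOn_of_card_image_eq h
        exact huv (hio (Finset.mem_coe.2 (Finset.mem_univ u))
          (Finset.mem_coe.2 (Finset.mem_univ v)) heq)
  | succ n ih =>
    intro D hdom hcard
    by_cases hinj : ∀ u v : V, u ≠ v → closedNbhd G u ∩ D ≠ closedNbhd G v ∩ D
    · exact ⟨D, ⟨hdom, hinj⟩, by omega⟩
    · push_neg at hinj
      obtain ⟨u, v, huv, heq⟩ := hinj
      -- a separating vertex exists since G is identifiable
      have hne : closedNbhd G u ≠ closedNbhd G v := hI u v huv
      have hw : ∃ w, ¬ (w ∈ closedNbhd G u ↔ w ∈ closedNbhd G v) := by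
        by_contra h
        push_neg at h
        exact hne (Set.ext fun w => h w)
      obtain ⟨w, hw⟩ := hw
      set D' : Set V := insert w D with hD'
      have hDD' : D ⊆ D' := Set.subset_insert w D
      have hdom' : ∀ x, (closedNbhd G x ∩ D').Nonempty := fun x =>
        (hdom x).mono (Set.inter_subset_inter_right _ hDD')
      -- traces w.r.t. D' restrict to traces w.r.t. D
      have hres : ∀ x : V, (closedNbhd G x ∩ D') ∩ D = closedNbhd G x ∩ D := by
        intro x
        rw [Set.inter_assoc, Set.inter_eq_self_of_subset_right hDD']
      -- w separates u and v in D'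
      have hne' : closedNbhd G u ∩ D' ≠ closedNbhd G v ∩ D' := by
        intro h
        apply hw
        constructor
        · intro hu
          have : w ∈ closedNbhd G u ∩ D' := ⟨hu, Set.mem_insert w D⟩
          rw [h] at this
          exact this.1
        · intro hv
          have : w ∈ closedNbhd G v ∩ D' := ⟨hv, Set.mem_insert w D⟩
          rw [← h] at this
          exact this.1
      -- strict increase in number of distinct traces
      have hcard' : (Finset.univ.image (fun x => closedNbhd G x ∩ D)).card <
          (Finset.univ.image (fun x => closedNbhd G x ∩ D')).card := by
        have himg : Finset.univ.image (fun x => closedNbhd G x ∩ D) =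
            (Finset.univ.image (fun x => closedNbhd G x ∩ D')).image (· ∩ D) := by
          rw [Finset.image_image]
          exact Finset.image_congr (fun x _ => (hres x).symm)
        have hle : ((Finset.univ.image (fun x => closedNbhd G x ∩ D')).image
            (· ∩ D)).card ≤ (Finset.univ.image (fun x => closedNbhd G x ∩ D')).card :=
          Finset.card_image_le
        rw [himg]
        rcases lt_or_eq_of_le hle with h | h
        · exact h
        · exfalso
          have hio := Finset.injOn_of_card_image_eq h
          have hu' : closedNbhd G u ∩ D' ∈
              Finset.univ.image (fun x => closedNbhd G x ∩ D') :=
            Finset.mem_image_of_mem _ (Finset.mem_univ u)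
          have hv' : closedNbhd G v ∩ D' ∈
              Finset.univ.image (fun x => closedNbhd G x ∩ D') :=
            Finset.mem_image_of_mem _ (Finset.mem_univ v)
          apply hne'
          apply hio (Finset.mem_coe.2 hu') (Finset.mem_coe.2 hv')
          simp only
          rw [hres u, hres v, heq]
      obtain ⟨E, hE, hEcard⟩ := ih D' hdom' (by omega)
      refine ⟨E, hE, ?_⟩
      have : D'.ncard ≤ D.ncard + 1 := Set.ncard_insert_le w D
      omega

/-- For every finite identifiable graph `G`, `γ^ID(G) ≤ 2 γ^LD(G)`. -/
theorem id_le_two_ld {V : Type*} [Fintype V] (G : SimpleGraph V)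
    (hI : Identifiable G) :
    gammaID G ≤ 2 * gammaLD G := by
  classical
  -- the LD set is nonempty: V itself is an LD-code
  have hLDne : {n : ℕ | ∃ C : Set V, IsLDCode G C ∧ C.ncard = n}.Nonempty := by
    refine ⟨(Set.univ : Set V).ncard, Set.univ, ⟨?_, ?_⟩, rfl⟩
    · intro u
      exact ⟨u, Set.mem_insert u _, Set.mem_univ u⟩
    · intro u v hu _ _
      exact absurd (Set.mem_univ u) hu
  obtain ⟨C, hC, hCcard⟩ := Nat.sInf_mem hLDne
  -- count distinct traces of C: vertices outside C have pairwise distinct traces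
  have key : Fintype.card V ≤ C.ncard +
      (Finset.univ.image (fun u => closedNbhd G u ∩ C)).card := by
    set T : Finset V := Finset.univ.filter (· ∉ C) with hT
    have hinj : Set.InjOn (fun u => closedNbhd G u ∩ C) ↑T := by
      intro u hu v hv h
      simp only [hT, Finset.coe_filter, Set.mem_setOf_eq] at hu hv
      by_contra huv
      apply hC.2 u v hu.2 hv.2 huv
      have e1 : closedNbhd G u ∩ C = G.neighborSet u ∩ C := by
        rw [closedNbhd, Set.insert_inter_of_notMem hu.2]
      have e2 : closedNbhd G v ∩ C = G.neighborSet v ∩ C := by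
        rw [closedNbhd, Set.insert_inter_of_notMem hv.2]
      rw [← e1, ← e2]
      exact h
    have h1 : T.card = (T.image (fun u => closedNbhd G u ∩ C)).card :=
      (Finset.card_image_of_injOn hinj).symm
    have h2 : (T.image (fun u => closedNbhd G u ∩ C)).card ≤
        (Finset.univ.image (fun u => closedNbhd G u ∩ C)).card :=
      Finset.card_le_card (Finset.image_subset_image (Finset.subset_univ T))
    have h3 : (Finset.univ.filter (· ∈ C)).card + T.card = Finset.univ.card :=
      Finset.card_filter_add_card_filter_not (fun u => u ∈ C)
    have h4 : (Finset.univ.filter (· ∈ C)).card = C.ncard := by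
      rw [Set.ncard_eq_toFinset_card' C]
      congr 1
      ext x
      simp
    simp only [Finset.card_univ] at h3
    omega
  obtain ⟨E, hE, hEcard⟩ := id_aux G hI C.ncard C hC.1 key
  have h1 : gammaID G ≤ E.ncard := Nat.sInf_le ⟨E, hE, rfl⟩
  have h2 : gammaLD G = sInf {n : ℕ | ∃ C : Set V, IsLDCode G C ∧ C.ncard = n} := rfl
  omega
end

section
/- For every integer n ≥ 3, the open locating-dominating number of the thin headless spider S_n equals n, i.e., γ^OLD(S_n) = n. -/
open SimpleGraph

variable {V : Type*}

/-- The thin headless spider `S_n`: the split graph on vertices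
`q_1, …, q_n, s_1, …, s_n` where the `q_i` (encoded as `Sum.inl i`) form a clique,
the `s_i` (encoded as `Sum.inr i`) form an independent set, and `s_i` is adjacent
exactly to `q_i`. -/
def thinHeadlessSpider (n : ℕ) : SimpleGraph (Fin n ⊕ Fin n) :=
  SimpleGraph.fromRel (fun x y =>
    match x, y with
    | Sum.inl i, Sum.inl j => i ≠ j
    | Sum.inl i, Sum.inr j => i = j
    | Sum.inr _, Sum.inl _ => False
    | Sum.inr _, Sum.inr _ => False)

lemma spider_adj_ll (n : ℕ) (i j : Fin n) :
    (thinHeadlessSpider n).Adj (Sum.inl i) (Sum.inl j) ↔ i ≠ j := by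
  simp [thinHeadlessSpider, SimpleGraph.fromRel_adj]; tauto

lemma spider_adj_lr (n : ℕ) (i j : Fin n) :
    (thinHeadlessSpider n).Adj (Sum.inl i) (Sum.inr j) ↔ i = j := by
  simp [thinHeadlessSpider, SimpleGraph.fromRel_adj]

lemma spider_adj_rl (n : ℕ) (i j : Fin n) :
    (thinHeadlessSpider n).Adj (Sum.inr i) (Sum.inl j) ↔ j = i := by
  simp [thinHeadlessSpider, SimpleGraph.fromRel_adj]

lemma spider_adj_rr (n : ℕ) (i j : Fin n) :
    ¬ (thinHeadlessSpider n).Adj (Sum.inr i) (Sum.inr j) := by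
  simp [thinHeadlessSpider, SimpleGraph.fromRel_adj]

lemma exists_third (n : ℕ) (hn : 3 ≤ n) (i j : Fin n) :
    ∃ k : Fin n, k ≠ i ∧ k ≠ j := by
  have h : (({i, j} : Finset (Fin n))ᶜ).Nonempty := by
    rw [← Finset.card_pos, Finset.card_compl]
    have : ({i, j} : Finset (Fin n)).card ≤ 2 :=
      (Finset.card_insert_le _ _).trans (by simp)
    simp only [Fintype.card_fin]
    omega
  obtain ⟨k, hk⟩ := h
  simp only [Finset.mem_compl, Finset.mem_insert, Finset.mem_singleton, not_or] at hk
  exact ⟨k, hk.1, hk.2⟩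

/-- For every `n ≥ 3`, `γ^OLD(S_n) = n` for the thin headless
spider `S_n`. -/
theorem old_thinHeadlessSpider (n : ℕ) (hn : 3 ≤ n) :
    gammaOLD (thinHeadlessSpider n) = n := by
  set G := thinHeadlessSpider n with hG
  set C : Set (Fin n ⊕ Fin n) := Set.range Sum.inl with hC
  have hCcard : C.ncard = n := by
    rw [hC, ← Set.image_univ, Set.ncard_image_of_injective _ Sum.inl_injective,
      Set.ncard_univ, Nat.card_eq_fintype_card, Fintype.card_fin]
  have hcode : IsOLDCode G C := by
    constructor
    · intro u
      match u with
      | Sum.inl i =>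
        obtain ⟨k, hki, _⟩ := exists_third n hn i i
        exact ⟨Sum.inl k, by
          simp [G, Set.mem_inter_iff, SimpleGraph.mem_neighborSet, spider_adj_ll, C,
            hki.symm]⟩
      | Sum.inr i =>
        exact ⟨Sum.inl i, by
          simp [G, Set.mem_inter_iff, SimpleGraph.mem_neighborSet, spider_adj_rl, C]⟩
    · intro u v huv heq
      match u, v with
      | Sum.inl i, Sum.inl j =>
        have hij : i ≠ j := fun h => huv (by rw [h])
        have h1 : Sum.inl j ∈ G.neighborSet (Sum.inl i) ∩ C := by
          simp [G, SimpleGraph.mem_neighborSet, spider_adj_ll, hij, C]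
        rw [heq] at h1
        simp [G, SimpleGraph.mem_neighborSet, spider_adj_ll, C] at h1
      | Sum.inl i, Sum.inr j =>
        obtain ⟨k, hki, hkj⟩ := exists_third n hn i j
        have h1 : Sum.inl k ∈ G.neighborSet (Sum.inl i) ∩ C := by
          simp [G, SimpleGraph.mem_neighborSet, spider_adj_ll, hki.symm, C]
        rw [heq] at h1
        simp [G, SimpleGraph.mem_neighborSet, spider_adj_rl, C] at h1
        exact hkj h1
      | Sum.inr i, Sum.inl j =>
        obtain ⟨k, hkj, hki⟩ := exists_third n hn j i
        have h1 : Sum.inl k ∈ G.neighborSet (Sum.inl j) ∩ C := by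
          simp [G, SimpleGraph.mem_neighborSet, spider_adj_ll, hkj.symm, C]
        rw [← heq] at h1
        simp [G, SimpleGraph.mem_neighborSet, spider_adj_rl, C] at h1
        exact hki h1
      | Sum.inr i, Sum.inr j =>
        have hij : i ≠ j := fun h => huv (by rw [h])
        have h1 : Sum.inl i ∈ G.neighborSet (Sum.inr i) ∩ C := by
          simp [G, SimpleGraph.mem_neighborSet, spider_adj_rl, C]
        rw [heq] at h1
        simp [G, SimpleGraph.mem_neighborSet, spider_adj_rl, C] at h1
        exact hij h1
  have hmem : n ∈ {m : ℕ | ∃ C : Set (Fin n ⊕ Fin n), IsOLDCode G C ∧ C.ncard = m} :=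
    ⟨C, hcode, hCcard⟩
  refine le_antisymm (Nat.sInf_le hmem) (le_csInf ⟨n, hmem⟩ ?_)
  rintro m ⟨D, hD, rfl⟩
  have hsub : C ⊆ D := by
    rintro x ⟨i, rfl⟩
    obtain ⟨y, hy⟩ := hD.1 (Sum.inr i)
    have : y = Sum.inl i := by
      match y with
      | Sum.inl j =>
        have := hy.1
        simp [G, SimpleGraph.mem_neighborSet, spider_adj_rl] at this
        rw [this]
      | Sum.inr j => exact absurd hy.1 (by simp [G, SimpleGraph.mem_neighborSet, spider_adj_rr])
    rw [← this]; exact hy.2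
  calc n = C.ncard := hCcard.symm
    _ ≤ D.ncard := Set.ncard_le_ncard hsub D.toFinite
end

section
/- Let G be a finite block graph and let C ⊆ V(G) be a set of vertices such that the subgraph of G induced by C has exactly k connected components C_1, …, C_k. Then the number of vertices of V(G) \ C that have neighbors in at least two different components among C_1, …, C_k is at most k − 1. -/
open SimpleGraph

variable {V : Type*}

namespace MyAux

variable {G : SimpleGraph V}

lemma mem_edges_iff_getVert {u v a b : V} (w : G.Walk u v) :
    s(a, b) ∈ w.edges ↔ ∃ t, t < w.length ∧
      ((w.getVert t = a ∧ w.getVert (t + 1) = b) ∨ (w.getVert t = b ∧ w.getVert (t + 1) = a)) := by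
  induction w with
  | nil => simp
  | @cons x y z h p ih =>
    rw [SimpleGraph.Walk.edges_cons, List.mem_cons, ih]
    constructor
    · rintro (heq | ⟨t, ht, hor⟩)
      · refine ⟨0, by simp, ?_⟩
        rw [Sym2.eq_iff] at heq
        rcases heq with ⟨rfl, rfl⟩ | ⟨rfl, rfl⟩
        · exact Or.inl ⟨rfl, by simp [SimpleGraph.Walk.getVert_cons_succ]⟩
        · exact Or.inr ⟨rfl, by simp [SimpleGraph.Walk.getVert_cons_succ]⟩
      · exact ⟨t + 1, by simpa using Nat.succ_lt_succ ht, by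
          simpa [SimpleGraph.Walk.getVert_cons_succ] using hor⟩
    · rintro ⟨t, ht, hor⟩
      cases t with
      | zero =>
        left
        simp only [SimpleGraph.Walk.getVert_zero] at hor
        have h1 : (SimpleGraph.Walk.cons h p).getVert 1 = y := by
          simp [SimpleGraph.Walk.getVert_cons_succ]
        rw [h1] at hor
        rw [Sym2.eq_iff]
        tauto
      | succ s =>
        right
        refine ⟨s, by simpa using Nat.lt_of_succ_lt_succ ht, ?_⟩
        simpa [SimpleGraph.Walk.getVert_cons_succ] using hor



lemma support_eq_map_getVert {u v : V} (w : G.Walk u v) :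
    w.support = (List.range (w.length + 1)).map w.getVert := by
  induction w with
  | nil => simp [SimpleGraph.Walk.getVert]
  | @cons a b c h p ih =>
    rw [SimpleGraph.Walk.support_cons, SimpleGraph.Walk.length_cons, ih,
      List.range_succ_eq_map (n := p.length + 1), List.map_cons, List.map_map]
    refine congrArg₂ List.cons rfl (List.map_congr_left fun i _ => ?_)
    rfl

lemma tail_support_eq_map_getVert {u v : V} (w : G.Walk u v) :
    w.support.tail = (List.range w.length).map (fun i => w.getVert (i + 1)) := by
  rw [support_eq_map_getVert, List.range_succ_eq_map, List.map_cons, List.tail_cons, List.map_map]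
  rfl

lemma end_mem_tail_support {u v : V} (w : G.Walk u v) (h : w.length ≠ 0) :
    v ∈ w.support.tail := by
  rw [tail_support_eq_map_getVert]
  refine List.mem_map.2 ⟨w.length - 1, List.mem_range.2 (by omega), ?_⟩
  rw [show w.length - 1 + 1 = w.length by omega, SimpleGraph.Walk.getVert_length]

lemma cycle_getVert_inj {u : V} {c : G.Walk u u} (hc : c.IsCycle) {i j : ℕ}
    (hi : i < c.length) (hj : j < c.length) (h : c.getVert i = c.getVert j) : i = j := by
  have h3 := hc.three_le_length
  have hnd : c.support.tail.Nodup := hc.2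
  rw [tail_support_eq_map_getVert] at hnd
  have hinj : ∀ s ∈ List.range c.length, ∀ t ∈ List.range c.length,
      c.getVert (s + 1) = c.getVert (t + 1) → s = t := List.inj_on_of_nodup_map hnd
  have key : ∀ s t : ℕ, s = 0 → 0 < t → t < c.length → c.getVert s ≠ c.getVert t := by
    intro s t hs ht htl heq
    subst hs
    rw [SimpleGraph.Walk.getVert_zero] at heq
    have heq' : c.getVert c.length = c.getVert t := by
      rw [SimpleGraph.Walk.getVert_length]; exact heq
    have h1 : c.length - 1 = t - 1 := by
      apply hinj _ (List.mem_range.2 (by omega)) _ (List.mem_range.2 (by omega))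
      rw [show c.length - 1 + 1 = c.length by omega, show t - 1 + 1 = t by omega]
      exact heq'
    omega
  rcases Nat.eq_zero_or_pos i with hi0 | hi0
  · rcases Nat.eq_zero_or_pos j with hj0 | hj0
    · omega
    · exact absurd h (key i j hi0 hj0 hj)
  · rcases Nat.eq_zero_or_pos j with hj0 | hj0
    · exact absurd h.symm (key j i hj0 hi0 hi)
    · have := hinj (i - 1) (List.mem_range.2 (by omega)) (j - 1) (List.mem_range.2 (by omega))
        (by rw [show i - 1 + 1 = i by omega, show j - 1 + 1 = j by omega]; exact h)
      omega

lemma mem_support_iff_mem_tail {u : V} {c : G.Walk u u} (h : c.length ≠ 0) {x : V} :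
    x ∈ c.support ↔ x ∈ c.support.tail := by
  constructor
  · intro hx
    rw [SimpleGraph.Walk.support_eq_cons] at hx
    rcases List.mem_cons.1 hx with rfl | hx
    · exact end_mem_tail_support c h
    · exact hx
  · intro hx
    rw [SimpleGraph.Walk.support_eq_cons]
    exact List.mem_cons_of_mem _ hx

lemma support_rotate_set [DecidableEq V] {u x : V} (c : G.Walk u u) (hc : c.IsCycle) (hx : x ∈ c.support) {y : V} :
    y ∈ (c.rotate x hx).support ↔ y ∈ c.support := by
  have h1 : c.length ≠ 0 := by have := hc.three_le_length; omega
  have hrot := SimpleGraph.Walk.support_rotate c x hx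
  have h2 : (c.rotate x hx).length ≠ 0 := by
    have := (hc.rotate hx).three_le_length; omega
  rw [mem_support_iff_mem_tail h2, mem_support_iff_mem_tail h1]
  exact hrot.mem_iff


lemma hasInducedCycle_of_chordless {u : V} {c : G.Walk u u} (hc : c.IsCycle) (h4 : 4 ≤ c.length)
    (hch : ∀ a b : V, a ∈ c.support → b ∈ c.support → G.Adj a b → s(a, b) ∈ c.edges) :
    HasInducedCycle G c.length := by
  set n := c.length with hn
  haveI : NeZero n := ⟨by omega⟩
  haveI : Fact (1 < n) := ⟨by omega⟩
  refine ⟨fun i => c.getVert i.val, ?_, ?_⟩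
  · intro i j hij
    exact ZMod.val_injective n (cycle_getVert_inj hc (ZMod.val_lt i) (ZMod.val_lt j) hij)
  · have hmem : ∀ i : ZMod n, c.getVert i.val ∈ c.support := by
      intro i
      rw [SimpleGraph.Walk.mem_support_iff_exists_getVert]
      exact ⟨i.val, rfl, le_of_lt (ZMod.val_lt i)⟩
    have hval_succ : ∀ i : ZMod n, (i + 1).val = (i.val + 1) % n := by
      intro i
      rw [ZMod.val_add, ZMod.val_one]
    have hadj_succ : ∀ i : ZMod n, G.Adj (c.getVert i.val) (c.getVert (i + 1).val) := by
      intro i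
      have hlt : i.val < n := ZMod.val_lt i
      rcases Nat.lt_or_ge (i.val + 1) n with hlt1 | hge1
      · have : (i + 1).val = i.val + 1 := by rw [hval_succ, Nat.mod_eq_of_lt hlt1]
        rw [this]
        exact c.adj_getVert_succ hlt
      · have heq : i.val + 1 = n := by omega
        have : (i + 1).val = 0 := by rw [hval_succ, heq, Nat.mod_self]
        rw [this, SimpleGraph.Walk.getVert_zero]
        have h2 := c.adj_getVert_succ (show i.val < c.length from hlt)
        rw [heq] at h2
        rwa [SimpleGraph.Walk.getVert_length] at h2
    have step : ∀ i j : ZMod n, ∀ t : ℕ, t < n → c.getVert t = c.getVert i.val →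
        c.getVert (t + 1) = c.getVert j.val → j = i + 1 := by
      intro i j t htl h1 h2
      have hti : t = i.val := cycle_getVert_inj hc htl (ZMod.val_lt i) h1
      apply ZMod.val_injective n
      rw [hval_succ, ← hti]
      rcases Nat.lt_or_ge (t + 1) n with hlt1 | hge1
      · have := cycle_getVert_inj hc hlt1 (ZMod.val_lt j) h2
        rw [Nat.mod_eq_of_lt hlt1]
        omega
      · have heq : t + 1 = n := by omega
        have h0 : c.getVert 0 = c.getVert j.val := by
          have hu : c.getVert n = u := by rw [hn]; exact c.getVert_length
          rw [heq] at h2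
          rw [SimpleGraph.Walk.getVert_zero]
          exact hu.symm.trans h2
        have := cycle_getVert_inj hc (show 0 < n by omega) (ZMod.val_lt j) h0
        rw [heq, Nat.mod_self]
        omega
    intro i j
    constructor
    · intro hadj
      have he := hch _ _ (hmem i) (hmem j) hadj
      rw [mem_edges_iff_getVert] at he
      obtain ⟨t, htl, hor | hor⟩ := he
      · exact Or.inl (step i j t htl hor.1 hor.2)
      · exact Or.inr (step j i t htl hor.1 hor.2)
    · rintro (rfl | rfl)
      · exact hadj_succ i
      · exact (hadj_succ j).symm


lemma triangle_clique {u : V} {c : G.Walk u u} (hc : c.IsCycle) (h3 : c.length = 3) :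
    G.IsClique {v | v ∈ c.support} := by
  have h30 : c.getVert 3 = c.getVert 0 := by
    rw [SimpleGraph.Walk.getVert_zero, ← h3, SimpleGraph.Walk.getVert_length]
  have g0 := c.adj_getVert_succ (show 0 < c.length by omega)
  have g1 := c.adj_getVert_succ (show 1 < c.length by omega)
  have g2 := c.adj_getVert_succ (show 2 < c.length by omega)
  rw [show (2:ℕ) + 1 = 3 from rfl, h30] at g2
  intro a ha b hb hab
  simp only [Set.mem_setOf_eq, SimpleGraph.Walk.mem_support_iff_exists_getVert] at ha hb
  obtain ⟨s, hsa, hsle⟩ := ha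
  obtain ⟨t, htb, htle⟩ := hb
  rw [h3] at hsle htle
  have ha' : ∃ s, s < 3 ∧ c.getVert s = a := by
    rcases Nat.lt_or_ge s 3 with h | h
    · exact ⟨s, h, hsa⟩
    · have hs3 : s = 3 := by omega
      subst hs3
      exact ⟨0, by omega, by rw [← h30]; exact hsa⟩
  have hb' : ∃ t, t < 3 ∧ c.getVert t = b := by
    rcases Nat.lt_or_ge t 3 with h | h
    · exact ⟨t, h, htb⟩
    · have ht3 : t = 3 := by omega
      subst ht3
      exact ⟨0, by omega, by rw [← h30]; exact htb⟩
  clear hsa htb hsle htle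
  obtain ⟨s, hs3, hsa⟩ := ha'
  obtain ⟨t, ht3, htb⟩ := hb'
  interval_cases s <;> interval_cases t <;>
    first
      | exact absurd (hsa.symm.trans htb) hab
      | (rw [← hsa, ← htb];
         first | exact g0 | exact g0.symm | exact g1 | exact g1.symm
               | exact g2 | exact g2.symm)

lemma clique_support_aux [DecidableEq V] (hB : IsBlockGraph G) :
    ∀ N : ℕ, ∀ {u : V} (c : G.Walk u u), c.length ≤ N → c.IsCycle →
      G.IsClique {v | v ∈ c.support} := by
  intro N
  induction N with
  | zero => intro u c hl hc; exact absurd hc.three_le_length (by omega)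
  | succ N IH =>
    intro u c hl hc
    by_cases hch : ∃ p q : V, p ∈ c.support ∧ q ∈ c.support ∧ G.Adj p q ∧ s(p, q) ∉ c.edges
    · obtain ⟨p, q, hp, hq, hpq, hnotedge⟩ := hch
      set c' := c.rotate p hp with hc'def
      have hc' : c'.IsCycle := hc.rotate hp
      have hsupp : ∀ y : V, y ∈ c'.support ↔ y ∈ c.support :=
        fun y => support_rotate_set c hc hp
      have hedges : ∀ e, e ∈ c'.edges ↔ e ∈ c.edges := fun e => (c.rotate_edges p hp).mem_iff
      have hq' : q ∈ c'.support := (hsupp q).2 hq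
      have hqp : q ≠ p := hpq.ne'
      set w1 := c'.takeUntil q hq' with hw1
      set w2 := c'.dropUntil q hq' with hw2
      have hspec : w1.append w2 = c' := c'.take_spec hq'
      have hlen12 : w1.length + w2.length = c'.length := by
        rw [← SimpleGraph.Walk.length_append, hspec]
      have hclen : c'.length = c.length := by
        have h1 : (c.takeUntil p hp).length + (c.dropUntil p hp).length = c.length := by
          rw [← SimpleGraph.Walk.length_append, c.take_spec hp]
        have h2 : c'.length =
            (c.dropUntil p hp).length + (c.takeUntil p hp).length := by
          rw [hc'def, SimpleGraph.Walk.rotate, SimpleGraph.Walk.length_append]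
        omega
      -- lengths of the two arcs
      have hw1len : 2 ≤ w1.length := by
        rcases Nat.lt_or_ge w1.length 2 with hlt | hge
        · interval_cases h : w1.length
          · exact absurd (SimpleGraph.Walk.eq_of_length_eq_zero h) hqp.symm
          · exfalso
            apply hnotedge
            apply (hedges _).1
            apply SimpleGraph.Walk.edges_takeUntil_subset c' hq'
            rw [← hw1, mem_edges_iff_getVert]
            refine ⟨0, by omega, Or.inl ⟨SimpleGraph.Walk.getVert_zero w1, ?_⟩⟩
            show w1.getVert 1 = q
            rw [← h]
            exact SimpleGraph.Walk.getVert_length w1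
        · exact hge
      have hw2len : 2 ≤ w2.length := by
        rcases Nat.lt_or_ge w2.length 2 with hlt | hge
        · interval_cases h : w2.length
          · exact absurd (SimpleGraph.Walk.eq_of_length_eq_zero h) hqp
          · exfalso
            apply hnotedge
            apply (hedges _).1
            apply SimpleGraph.Walk.edges_dropUntil_subset c' hq'
            rw [← hw2, mem_edges_iff_getVert]
            refine ⟨0, by omega, Or.inr ⟨SimpleGraph.Walk.getVert_zero w2, ?_⟩⟩
            show w2.getVert 1 = p
            rw [← h]
            exact SimpleGraph.Walk.getVert_length w2
        · exact hge
      -- nodup decomposition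
      have hctail : c'.support.tail.Nodup := hc'.2
      have htailapp : c'.support.tail = w1.support.tail ++ w2.support.tail := by
        rw [← hspec, SimpleGraph.Walk.tail_support_append]
      rw [htailapp, List.nodup_append] at hctail
      obtain ⟨hnd1, hnd2, hdisj⟩ := hctail
      have hqmem1 : q ∈ w1.support.tail := end_mem_tail_support w1 (by omega)
      have hpmem2 : p ∈ w2.support.tail := end_mem_tail_support w2 (by omega)
      have hw1path : w1.IsPath := by
        rw [SimpleGraph.Walk.isPath_def, SimpleGraph.Walk.support_eq_cons, List.nodup_cons]
        exact ⟨fun hmem => hdisj p hmem p hpmem2 rfl, hnd1⟩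
      have hw2path : w2.IsPath := by
        rw [SimpleGraph.Walk.isPath_def, SimpleGraph.Walk.support_eq_cons, List.nodup_cons]
        exact ⟨fun hmem => hdisj q hqmem1 q hmem rfl, hnd2⟩
      have hedge_w1 : s(q, p) ∉ w1.edges := by
        intro hmem
        rw [Sym2.eq_swap] at hmem
        exact hnotedge ((hedges _).1 (SimpleGraph.Walk.edges_takeUntil_subset c' hq' hmem))
      have hedge_w2 : s(p, q) ∉ w2.edges := by
        intro hmem
        exact hnotedge ((hedges _).1 (SimpleGraph.Walk.edges_dropUntil_subset c' hq' hmem))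
      -- the two cycles
      have hc1 : (SimpleGraph.Walk.cons hpq.symm w1).IsCycle :=
        (SimpleGraph.Walk.cons_isCycle_iff w1 hpq.symm).2 ⟨hw1path, hedge_w1⟩
      have hc2 : (SimpleGraph.Walk.cons hpq w2).IsCycle :=
        (SimpleGraph.Walk.cons_isCycle_iff w2 hpq).2 ⟨hw2path, hedge_w2⟩
      have hlc1 : (SimpleGraph.Walk.cons hpq.symm w1).length ≤ N := by
        rw [SimpleGraph.Walk.length_cons]; omega
      have hlc2 : (SimpleGraph.Walk.cons hpq w2).length ≤ N := by
        rw [SimpleGraph.Walk.length_cons]; omega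
      have hcl1 := IH _ hlc1 hc1
      have hcl2 := IH _ hlc2 hc2
      have H1 : ∀ x y : V, x ∈ w1.support → y ∈ w1.support → x ≠ y → G.Adj x y := by
        intro x y hx hy hxy
        refine hcl1 ?_ ?_ hxy
        · simp only [Set.mem_setOf_eq, SimpleGraph.Walk.support_cons]
          exact List.mem_cons_of_mem _ hx
        · simp only [Set.mem_setOf_eq, SimpleGraph.Walk.support_cons]
          exact List.mem_cons_of_mem _ hy
      have H2 : ∀ x y : V, x ∈ w2.support → y ∈ w2.support → x ≠ y → G.Adj x y := by
        intro x y hx hy hxy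
        refine hcl2 ?_ ?_ hxy
        · simp only [Set.mem_setOf_eq, SimpleGraph.Walk.support_cons]
          exact List.mem_cons_of_mem _ hx
        · simp only [Set.mem_setOf_eq, SimpleGraph.Walk.support_cons]
          exact List.mem_cons_of_mem _ hy
      have hmemc : ∀ v : V, v ∈ c.support ↔ (v ∈ w1.support ∨ v ∈ w2.support) := by
        intro v
        rw [← hsupp, ← hspec, SimpleGraph.Walk.mem_support_append_iff]
      have hp1 : p ∈ w1.support := SimpleGraph.Walk.start_mem_support w1
      have hp2 : p ∈ w2.support := SimpleGraph.Walk.end_mem_support w2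
      have hq1 : q ∈ w1.support := SimpleGraph.Walk.end_mem_support w1
      have hq2 : q ∈ w2.support := SimpleGraph.Walk.start_mem_support w2
      have hmix : ∀ x y : V, x ∈ w1.support → y ∈ w2.support → x ≠ y → G.Adj x y := by
        intro x y hx hy hxy
        by_cases hx2 : x ∈ w2.support
        · exact H2 x y hx2 hy hxy
        by_cases hy1 : y ∈ w1.support
        · exact H1 x y hx hy1 hxy
        have hxp : x ≠ p := fun h => hx2 (h ▸ hp2)
        have hxq : x ≠ q := fun h => hx2 (h ▸ hq2)
        have hyp : y ≠ p := fun h => hy1 (h ▸ hp1)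
        have hyq : y ≠ q := fun h => hy1 (h ▸ hq1)
        by_contra hnadj
        exact hB.2 ⟨p, q, x, y, hpq.ne, hxp.symm, hyp.symm, hxq.symm, hyq.symm, hxy,
          hpq, (H1 x p hx hp1 hxp).symm, (H1 x q hx hq1 hxq).symm,
          (H2 y p hy hp2 hyp).symm, (H2 y q hy hq2 hyq).symm, hnadj⟩
      intro a ha b hb hab
      simp only [Set.mem_setOf_eq] at ha hb
      rcases (hmemc a).1 ha with ha1 | ha2 <;> rcases (hmemc b).1 hb with hb1 | hb2
      · exact H1 a b ha1 hb1 hab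
      · exact hmix a b ha1 hb2 hab
      · exact (hmix b a hb1 ha2 hab.symm).symm
      · exact H2 a b ha2 hb2 hab
    · push_neg at hch
      rcases Nat.lt_or_ge c.length 4 with hlt | hge
      · have h3 : c.length = 3 := by have := hc.three_le_length; omega
        exact triangle_clique hc h3
      · exact absurd (hasInducedCycle_of_chordless hc hge hch) (hB.1 c.length hge)

theorem isClique_support_of_isCycle (hB : IsBlockGraph G) {u : V} {c : G.Walk u u}
    (hc : c.IsCycle) : G.IsClique {v | v ∈ c.support} := by
  classical
  exact clique_support_aux hB c.length c le_rfl hc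


/-- The inclusion homomorphism between induced subgraphs. -/
def inclHom {S T : Set V} (h : S ⊆ T) : G.induce S →g G.induce T :=
  ⟨Set.inclusion h, fun {a b} hab => hab⟩

/-- The homomorphism from an induced subgraph to the ambient graph. -/
def outHom (S : Set V) : G.induce S →g G :=
  ⟨Subtype.val, fun {a b} hab => hab⟩

lemma comp_ne_of_outside (hB : IsBlockGraph G) {S : Set V} {x y z : V} (hxS : x ∉ S)
    (hy : y ∈ S) (hz : z ∈ S) (hxy : G.Adj x y) (hxz : G.Adj x z)
    (hyz : y ≠ z) (hnadj : ¬ G.Adj y z) :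
    (G.induce S).connectedComponentMk ⟨y, hy⟩ ≠ (G.induce S).connectedComponentMk ⟨z, hz⟩ := by
  classical
  intro heq
  obtain ⟨w⟩ := ConnectedComponent.exact heq
  have hW : ∀ v ∈ (w.map (outHom S)).support, v ∈ S := by
    intro v hv
    rw [SimpleGraph.Walk.support_map] at hv
    obtain ⟨v', _, rfl⟩ := List.mem_map.1 hv
    exact v'.2
  set P : G.Walk y z := (w.map (outHom S)).bypass with hPdef
  have hP : P.IsPath := SimpleGraph.Walk.bypass_isPath _
  have hPsupp : ∀ v ∈ P.support, v ∈ S :=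
    fun v hv => hW v (SimpleGraph.Walk.support_bypass_subset _ hv)
  have hxP : x ∉ P.support := fun h => hxS (hPsupp x h)
  have hczx : G.Adj z x := hxz.symm
  have hQpath : (P.concat hczx).IsPath := by
    rw [← SimpleGraph.Walk.isPath_reverse_iff, SimpleGraph.Walk.reverse_concat,
      SimpleGraph.Walk.cons_isPath_iff]
    refine ⟨hP.reverse, ?_⟩
    rw [SimpleGraph.Walk.support_reverse]
    simpa using hxP
  have hcyc : (SimpleGraph.Walk.cons hxy (P.concat hczx)).IsCycle := by
    rw [SimpleGraph.Walk.cons_isCycle_iff]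
    refine ⟨hQpath, ?_⟩
    rw [SimpleGraph.Walk.edges_concat]
    intro hmem
    rw [List.concat_eq_append, List.mem_append] at hmem
    rcases hmem with hmem' | heq'
    · exact hxP (SimpleGraph.Walk.fst_mem_support_of_mem_edges P hmem')
    · rw [List.mem_singleton, Sym2.eq_iff] at heq'
      rcases heq' with ⟨rfl, _⟩ | ⟨_, rfl⟩
      · exact hxS hz
      · exact hyz rfl
  have hclique := isClique_support_of_isCycle hB hcyc
  have hy' : y ∈ (SimpleGraph.Walk.cons hxy (P.concat hczx)).support := by
    rw [SimpleGraph.Walk.support_cons]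
    apply List.mem_cons_of_mem
    rw [SimpleGraph.Walk.support_concat]
    rw [List.mem_append]
    exact Or.inl (SimpleGraph.Walk.start_mem_support P)
  have hz' : z ∈ (SimpleGraph.Walk.cons hxy (P.concat hczx)).support := by
    rw [SimpleGraph.Walk.support_cons]
    apply List.mem_cons_of_mem
    rw [SimpleGraph.Walk.support_concat]
    rw [List.mem_append]
    exact Or.inl (SimpleGraph.Walk.end_mem_support P)
  exact hnadj (hclique hy' hz' hyz)

lemma card_lt_of_merge [Fintype V] {S : Set V} {x : V} (hx : x ∉ S) {a b : V}
    (ha : a ∈ S) (hb : b ∈ S) (hxa : G.Adj x a) (hxb : G.Adj x b)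
    (hab : (G.induce S).connectedComponentMk ⟨a, ha⟩ ≠
      (G.induce S).connectedComponentMk ⟨b, hb⟩) :
    Nat.card ((G.induce (insert x S)).ConnectedComponent) <
      Nat.card ((G.induce S).ConnectedComponent) := by
  classical
  set φ : (G.induce S).ConnectedComponent → (G.induce (insert x S)).ConnectedComponent :=
    ConnectedComponent.map (inclHom (Set.subset_insert x S)) with hφ
  have haS : a ∈ insert x S := Set.mem_insert_of_mem x ha
  have hbS : b ∈ insert x S := Set.mem_insert_of_mem x hb
  have hsurj : Function.Surjective φ := by
    intro comp
    refine ConnectedComponent.ind (fun v => ?_) comp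
    rcases Set.mem_insert_iff.1 v.2 with hvx | hvS
    · refine ⟨(G.induce S).connectedComponentMk ⟨a, ha⟩, ?_⟩
      show (G.induce (insert x S)).connectedComponentMk _ = _
      apply ConnectedComponent.sound
      have hadj : (G.induce (insert x S)).Adj ⟨a, haS⟩ v := by
        show G.Adj a v.1
        rw [hvx]
        exact hxa.symm
      exact hadj.reachable
    · refine ⟨(G.induce S).connectedComponentMk ⟨v.1, hvS⟩, ?_⟩
      show (G.induce (insert x S)).connectedComponentMk _ = _
      exact congrArg _ (Subtype.ext rfl)
  have hninj : ¬ Function.Injective φ := by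
    intro hinj
    apply hab
    apply hinj
    show (G.induce (insert x S)).connectedComponentMk _ =
      (G.induce (insert x S)).connectedComponentMk _
    apply ConnectedComponent.sound
    have h1 : (G.induce (insert x S)).Adj ⟨a, haS⟩ ⟨x, Set.mem_insert x S⟩ := hxa.symm
    have h2 : (G.induce (insert x S)).Adj ⟨x, Set.mem_insert x S⟩ ⟨b, hbS⟩ := hxb
    exact h1.reachable.trans h2.reachable
  haveI : Fintype ((G.induce S).ConnectedComponent) := Fintype.ofFinite _
  haveI : Fintype ((G.induce (insert x S)).ConnectedComponent) := Fintype.ofFinite _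
  rw [Nat.card_eq_fintype_card, Nat.card_eq_fintype_card]
  exact Fintype.card_lt_of_surjective_not_injective φ hsurj hninj

end MyAux

/-- If `G` is a finite block graph and `C ⊆ V(G)` induces a subgraph
with exactly `k` connected components, then at most `k - 1` vertices outside `C`
have neighbors in at least two different components of `G[C]`. -/
theorem card_V3_le {V : Type*} [Fintype V] (G : SimpleGraph V)
    (hB : IsBlockGraph G) (C : Set V) (k : ℕ)
    (hk : Nat.card ((G.induce C).ConnectedComponent) = k) :
    {x : V | x ∉ C ∧ ∃ y z : C, G.Adj x ↑y ∧ G.Adj x ↑z ∧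
        (G.induce C).connectedComponentMk y ≠ (G.induce C).connectedComponentMk z}.ncard
      ≤ k - 1 := by
  classical
  set X := {x : V | x ∉ C ∧ ∃ y z : C, G.Adj x ↑y ∧ G.Adj x ↑z ∧
      (G.induce C).connectedComponentMk y ≠ (G.induce C).connectedComponentMk z} with hX
  have claim : ∀ F : Finset V, ↑F ⊆ X →
      Nat.card ((G.induce (C ∪ ↑F)).ConnectedComponent) + F.card ≤ k := by
    intro F
    induction F using Finset.induction_on with
    | empty =>
      intro _
      rw [show C ∪ (↑(∅ : Finset V) : Set V) = C by simp]
      simpa using hk.le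
    | @insert x F hxF IH =>
      intro hsub
      have hxX : x ∈ X := hsub (by simp)
      have hFX : (↑F : Set V) ⊆ X := fun v hv => hsub (by simp [hv])
      have IH' := IH hFX
      obtain ⟨hxC, y, z, hxy, hxz, hne⟩ := hxX
      have hyz : (y : V) ≠ (z : V) := by
        intro h
        exact hne (congrArg _ (Subtype.ext h))
      have hnadj : ¬ G.Adj ↑y ↑z := by
        intro h
        exact hne (ConnectedComponent.connectedComponentMk_eq_of_adj
          (show (G.induce C).Adj y z from h))
      have hxS : x ∉ C ∪ (↑F : Set V) := by
        rintro (h | h)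
        · exact hxC h
        · exact hxF (by exact_mod_cast h)
      have hyS : (y : V) ∈ C ∪ (↑F : Set V) := Or.inl y.2
      have hzS : (z : V) ∈ C ∪ (↑F : Set V) := Or.inl z.2
      have hkeyC : (G.induce (C ∪ (↑F : Set V))).connectedComponentMk ⟨y, hyS⟩ ≠
          (G.induce (C ∪ (↑F : Set V))).connectedComponentMk ⟨z, hzS⟩ :=
        MyAux.comp_ne_of_outside hB hxS hyS hzS hxy hxz hyz hnadj
      have hlt := MyAux.card_lt_of_merge hxS hyS hzS hxy hxz hkeyC
      have hrw : (C ∪ (↑(insert x F) : Set V)) = insert x (C ∪ (↑F : Set V)) := by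
        rw [Finset.coe_insert, Set.union_insert]
      rw [hrw, Finset.card_insert_of_notMem hxF]
      omega
  have hfin : X.Finite := Set.toFinite X
  have hclaim := claim hfin.toFinset (by rw [Set.Finite.coe_toFinset])
  have hcard : X.ncard = hfin.toFinset.card := Set.ncard_eq_toFinset_card X hfin
  rcases X.eq_empty_or_nonempty with hemp | hne
  · rw [hemp]
    simp
  · obtain ⟨x0, hx0⟩ := hne
    have hx0' : x0 ∈ C ∪ (↑hfin.toFinset : Set V) := Or.inr (by rw [Set.Finite.coe_toFinset]; exact hx0)
    haveI : Nonempty ((G.induce (C ∪ (↑hfin.toFinset : Set V))).ConnectedComponent) :=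
      ⟨(G.induce _).connectedComponentMk ⟨x0, hx0'⟩⟩
    haveI : Finite ((G.induce (C ∪ (↑hfin.toFinset : Set V))).ConnectedComponent) := by
      exact Finite.of_fintype _
    have hpos : 0 < Nat.card ((G.induce (C ∪ (↑hfin.toFinset : Set V))).ConnectedComponent) :=
      Nat.card_pos
    omega
end

section
/- Let G be a finite block graph and let C ⊆ V(G) be a locating-dominating code such that the subgraph G[C] induced by C has exactly k connected components. Let V_4 be the set of vertices x ∈ V(G) \ C that have at least two neighbors in C, all of whose neighbors in C lie in a single connected component of G[C]. Then |V_4| ≤ |C| − k. -/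
open SimpleGraph

variable {V : Type*}

section AuxProof

variable {V : Type*} {G : SimpleGraph V}

private lemma diamond_of (hB : IsBlockGraph G) {a b c d : V} (hab : G.Adj a b)
    (hac : G.Adj a c) (hbc : G.Adj b c) (had : G.Adj a d) (hbd : G.Adj b d)
    (hcd : ¬ G.Adj c d) (hcd' : c ≠ d) : False :=
  hB.2 ⟨a, b, c, d, hab.ne, hac.ne, had.ne, hbc.ne, hbd.ne, hcd', hab, hac, hbc, had, hbd, hcd⟩

/-- In a block graph, if `u` and `v` are two distinct neighbours of `w` joined by a
walk avoiding `w`, then `u` and `v` are adjacent. -/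
private lemma adj_of_avoid (hB : IsBlockGraph G) (w : V) :
    ∀ m : ℕ, ∀ (u v : V) (f : ℕ → V), f 0 = u → f m = v →
      (∀ i, i < m → G.Adj (f i) (f (i + 1))) → (∀ i, i ≤ m → f i ≠ w) →
      G.Adj w u → G.Adj w v → u ≠ v → G.Adj u v := by
  intro m
  induction m using Nat.strong_induction_on with
  | _ M IH =>
  intro u v f h0 hM hadj havoid hwu hwv huv
  classical
  rcases Nat.lt_or_ge M 2 with hM2 | hM2
  · interval_cases M
    · exact absurd (h0.symm.trans hM) huv
    · have h := hadj 0 (by omega)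
      rw [h0] at h
      rw [hM] at h
      exact h
  · by_contra hne
    -- splicing out a repeated vertex
    have splice : ∀ a b : ℕ, a ≤ b → b ≤ M → f a = f b → a + (M - b) < M → False := by
      intro a b hab hbM hfab hlt
      set g : ℕ → V := fun i => if i ≤ a then f i else f (b + (i - a)) with hgdef
      have hg : ∀ i, a ≤ i → g i = f (b + (i - a)) := by
        intro i hi
        simp only [hgdef]
        rcases eq_or_lt_of_le hi with h | h
        · rw [if_pos (le_of_eq h.symm), show b + (i - a) = b by omega, ← hfab, h]
        · rw [if_neg (by omega)]
      have hg0 : ∀ i, i ≤ a → g i = f i := by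
        intro i hi
        simp only [hgdef]
        rw [if_pos hi]
      refine hne (IH (a + (M - b)) hlt u v g ?_ ?_ ?_ ?_ hwu hwv huv)
      · rw [hg0 0 (Nat.zero_le a)]; exact h0
      · rw [hg _ (by omega), show b + (a + (M - b) - a) = M by omega]
        exact hM
      · intro i hi
        rcases Nat.lt_or_ge i a with h | h
        · rw [hg0 i (by omega), hg0 (i + 1) (by omega)]
          exact hadj i (by omega)
        · rw [hg i h, hg (i + 1) (by omega), show b + (i + 1 - a) = b + (i - a) + 1 by omega]
          exact hadj _ (by omega)
      · intro i hi
        rcases Nat.lt_or_ge i a with h | h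
        · rw [hg0 i (by omega)]
          exact havoid i (by omega)
        · rw [hg i h]
          exact havoid _ (by omega)
    have hInj : ∀ a b : ℕ, a < b → b ≤ M → f a ≠ f b := by
      intro a b h1 h2 hf
      exact splice a b h1.le h2 hf (by omega)
    -- splicing out a chord
    have hChord : ∀ a b : ℕ, a + 1 < b → b ≤ M → ¬ G.Adj (f a) (f b) := by
      intro a b hab hbM hch
      set g : ℕ → V := fun i => if i ≤ a then f i else f (b + (i - (a + 1))) with hgdef
      have hg : ∀ i, a + 1 ≤ i → g i = f (b + (i - (a + 1))) := by
        intro i hi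
        simp only [hgdef]
        rw [if_neg (by omega)]
      have hg0 : ∀ i, i ≤ a → g i = f i := by
        intro i hi
        simp only [hgdef]
        rw [if_pos hi]
      refine hne (IH (a + 1 + (M - b)) (by omega) u v g ?_ ?_ ?_ ?_ hwu hwv huv)
      · rw [hg0 0 (Nat.zero_le a)]; exact h0
      · rw [hg _ (by omega), show b + (a + 1 + (M - b) - (a + 1)) = M by omega]
        exact hM
      · intro i hi
        rcases Nat.lt_or_ge i a with h | h
        · rw [hg0 i (by omega), hg0 (i + 1) (by omega)]
          exact hadj i (by omega)
        · rcases eq_or_lt_of_le h with h' | h'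
          · rw [hg0 i (by omega), hg (i + 1) (by omega),
              show b + (i + 1 - (a + 1)) = b by omega, ← h']
            exact hch
          · rw [hg i (by omega), hg (i + 1) (by omega),
              show b + (i + 1 - (a + 1)) = b + (i - (a + 1)) + 1 by omega]
            exact hadj _ (by omega)
      · intro i hi
        rcases Nat.lt_or_ge i (a + 1) with h | h
        · rw [hg0 i (by omega)]
          exact havoid i (by omega)
        · rw [hg i h]
          exact havoid _ (by omega)
    -- the first index ≥ 1 whose vertex is adjacent to w
    have hex : ∃ i, 1 ≤ i ∧ G.Adj w (f i) := ⟨M, by omega, by rw [hM]; exact hwv⟩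
    obtain ⟨j, ⟨hj1, hjadj⟩, hjmin⟩ :
        ∃ j, (1 ≤ j ∧ G.Adj w (f j)) ∧ ∀ i, i < j → ¬ (1 ≤ i ∧ G.Adj w (f i)) :=
      ⟨Nat.find hex, Nat.find_spec hex, fun i h => Nat.find_min hex h⟩
    have hjM : j ≤ M := by
      by_contra hcon
      exact hjmin M (by omega) ⟨by omega, by rw [hM]; exact hwv⟩
    rcases Nat.lt_or_ge j 2 with hj2 | hj2
    · -- j = 1 : a diamond on w, f 1, u, v
      have hj : G.Adj w (f 1) := by
        rw [show (1 : ℕ) = j by omega]; exact hjadj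
      have h1v : f 1 ≠ v := by
        intro hfv
        exact hInj 1 M (by omega) le_rfl (hfv.trans hM.symm)
      have hA : G.Adj (f 1) v :=
        IH (M - 1) (by omega) (f 1) v (fun i => f (i + 1)) rfl
          (by show f (M - 1 + 1) = v
              rw [show M - 1 + 1 = M by omega]
              exact hM)
          (fun i hi => hadj (i + 1) (by omega))
          (fun i hi => havoid (i + 1) (by omega)) hj hwv h1v
      have hb_u : G.Adj (f 1) u := by
        have h := hadj 0 (by omega)
        rw [h0] at h
        exact h.symm
      exact diamond_of hB hj hwu hb_u hwv hA hne huv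
    · -- j ≥ 2 : an induced cycle of length j + 2
      set n := j + 2 with hndef
      haveI : NeZero n := ⟨by omega⟩
      have hone : (1 : ZMod n).val = 1 := by
        rw [ZMod.val_one_eq_one_mod, Nat.mod_eq_of_lt (by omega)]
      have hsucc : ∀ x : ZMod n, (x + 1).val = (x.val + 1) % n := fun x => by
        rw [ZMod.val_add, hone]
      have hvlt : ∀ x : ZMod n, x.val < n := fun x => ZMod.val_lt x
      have hn0 : (j + 1 + 1) % n = 0 := by
        have e : j + 1 + 1 = n := by omega
        rw [e, Nat.mod_self]
      set g : ZMod n → V := fun i => if i.val ≤ j then f i.val else w with hgdef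
      have hgle : ∀ i : ZMod n, i.val ≤ j → g i = f i.val := by
        intro i h
        simp only [hgdef]
        rw [if_pos h]
      have hggt : ∀ i : ZMod n, ¬ i.val ≤ j → g i = w := by
        intro i h
        simp only [hgdef]
        rw [if_neg h]
      have hinj : Function.Injective g := by
        intro i i' h
        by_cases h1 : i.val ≤ j <;> by_cases h2 : i'.val ≤ j
        · rw [hgle i h1, hgle i' h2] at h
          refine ZMod.val_injective n ?_
          rcases Nat.lt_trichotomy i.val i'.val with hlt | he | hlt
          · exact absurd h (hInj _ _ hlt (by omega))
          · exact he
          · exact absurd h.symm (hInj _ _ hlt (by omega))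
        · rw [hgle i h1, hggt i' h2] at h
          exact absurd h (havoid _ (by omega))
        · rw [hggt i h1, hgle i' h2] at h
          exact absurd h.symm (havoid _ (by omega))
        · refine ZMod.val_injective n ?_
          have := hvlt i; have := hvlt i'
          omega
      have hmk : ∀ i i' : ZMod n, i' = i + 1 ↔ i'.val = (i.val + 1) % n := fun i i' =>
        ⟨fun h => by rw [h, hsucc], fun h => ZMod.val_injective n (by rw [hsucc]; exact h)⟩
      have key : ∀ i i' : ZMod n, G.Adj (g i) (g i') ↔ (i' = i + 1 ∨ i = i' + 1) := by
        intro i i'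
        have hi := hvlt i
        have hi' := hvlt i'
        rw [hmk i i', hmk i' i]
        by_cases h1 : i.val ≤ j <;> by_cases h2 : i'.val ≤ j
        · rw [hgle i h1, hgle i' h2,
            Nat.mod_eq_of_lt (by omega : i.val + 1 < n),
            Nat.mod_eq_of_lt (by omega : i'.val + 1 < n)]
          constructor
          · intro h
            rcases Nat.lt_trichotomy i.val i'.val with hlt | he | hlt
            · rcases eq_or_lt_of_le (Nat.succ_le_of_lt hlt) with h' | h'
              · exact Or.inl h'.symm
              · exact absurd h (hChord _ _ (by omega) (by omega))
            · exact absurd (congrArg f he) h.ne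
            · rcases eq_or_lt_of_le (Nat.succ_le_of_lt hlt) with h' | h'
              · exact Or.inr h'.symm
              · exact absurd h.symm (hChord _ _ (by omega) (by omega))
          · rintro (h | h)
            · rw [h]
              exact hadj i.val (by omega)
            · rw [h]
              exact (hadj i'.val (by omega)).symm
        · have hb : i'.val = j + 1 := by omega
          rw [hgle i h1, hggt i' h2,
            Nat.mod_eq_of_lt (by omega : i.val + 1 < n), hb, hn0]
          constructor
          · intro h
            rcases Nat.eq_zero_or_pos i.val with h' | h'
            · exact Or.inr h'
            · rcases eq_or_lt_of_le h1 with h'' | h''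
              · exact Or.inl (by omega)
              · exact absurd ⟨by omega, h.symm⟩ (hjmin i.val (by omega))
          · rintro (h | h)
            · rw [show i.val = j by omega]
              exact hjadj.symm
            · rw [h, h0]
              exact hwu.symm
        · have hb : i.val = j + 1 := by omega
          rw [hggt i h1, hgle i' h2,
            Nat.mod_eq_of_lt (by omega : i'.val + 1 < n), hb, hn0]
          constructor
          · intro h
            rcases Nat.eq_zero_or_pos i'.val with h' | h'
            · exact Or.inl h'
            · rcases eq_or_lt_of_le h2 with h'' | h''
              · exact Or.inr (by omega)
              · exact absurd ⟨by omega, h⟩ (hjmin i'.val (by omega))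
          · rintro (h | h)
            · rw [h, h0]
              exact hwu
            · rw [show i'.val = j by omega]
              exact hjadj
        · have ha : i.val = j + 1 := by omega
          have hb : i'.val = j + 1 := by omega
          rw [hggt i h1, hggt i' h2, ha, hb, hn0]
          constructor
          · intro h
            exact absurd rfl h.ne
          · rintro (h | h) <;> omega
      exact absurd ⟨g, hinj, key⟩ (hB.1 n (by omega))

/-- Two neighbours (inside `C`) of a vertex `x ∉ C` which lie in the same connected
component of `G[C]` are adjacent (in a block graph). -/
private lemma clique_of_common_nbr (hB : IsBlockGraph G) {C : Set V}
    {x : V} {u v : C} (hx : x ∉ C)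
    (hxu : G.Adj x ↑u) (hxv : G.Adj x ↑v) (huv : u ≠ v)
    (hcomp : (G.induce C).connectedComponentMk u = (G.induce C).connectedComponentMk v) :
    G.Adj ↑u ↑v := by
  obtain ⟨p'⟩ := SimpleGraph.ConnectedComponent.exact hcomp
  let p : G.Walk ↑u ↑v := p'.map (SimpleGraph.Embedding.induce C).toHom
  have hx_not : ∀ i, i ≤ p.length → p.getVert i ≠ x := by
    intro i hi hxe
    have hmem : x ∈ p.support := by
      rw [SimpleGraph.Walk.mem_support_iff_exists_getVert]
      exact ⟨i, hxe, hi⟩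
    rw [show p.support = _ from SimpleGraph.Walk.support_map _ _] at hmem
    obtain ⟨y, _, hyx⟩ := List.mem_map.mp hmem
    exact hx (hyx ▸ y.2)
  exact adj_of_avoid hB x p.length ↑u ↑v p.getVert p.getVert_zero p.getVert_length
    (fun i hi => p.adj_getVert_succ hi) hx_not hxu hxv (Subtype.coe_injective.ne huv)

/-- A geodesic from `u` to `r` avoids any vertex `w ≠ u` which is at least as far
from `r` as `u`. -/
private lemma walk_avoiding {W' : Type*} {G' : SimpleGraph W'} {u w r : W'}
    (hr : G'.Reachable u r) (hd : G'.dist u r ≤ G'.dist w r) (huw : u ≠ w) :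
    ∃ p : G'.Walk u r, w ∉ p.support := by
  classical
  obtain ⟨p, hp⟩ := hr.exists_walk_length_eq_dist
  refine ⟨p, fun hmem => ?_⟩
  have hspec := p.take_spec hmem
  have hlen : (p.takeUntil w hmem).length + (p.dropUntil w hmem).length = p.length := by
    rw [← SimpleGraph.Walk.length_append, hspec]
  have hdle : G'.dist w r ≤ (p.dropUntil w hmem).length := SimpleGraph.dist_le _
  have h0 : (p.takeUntil w hmem).length = 0 := by omega
  exact huw (SimpleGraph.Walk.eq_of_length_eq_zero h0)

end AuxProof

/-- If `G` is a finite block graph and `C` is a locating-dominating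
code whose induced subgraph `G[C]` has exactly `k` connected components, then the
set `V₄` of vertices outside `C` having at least two neighbors in `C`, all lying in
one component of `G[C]`, satisfies `|V₄| ≤ |C| - k`. -/
theorem card_V4_le {V : Type*} [Fintype V] (G : SimpleGraph V)
    (hB : IsBlockGraph G) (C : Set V) (hC : IsLDCode G C) (k : ℕ)
    (hk : Nat.card ((G.induce C).ConnectedComponent) = k) :
    {x : V | x ∉ C ∧ 1 < (G.neighborSet x ∩ C).ncard ∧
        ∀ y z : C, G.Adj x ↑y → G.Adj x ↑z →
          (G.induce C).connectedComponentMk y = (G.induce C).connectedComponentMk z}.ncard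
      ≤ C.ncard - k := by
  classical
  set W := {x : V | x ∉ C ∧ 1 < (G.neighborSet x ∩ C).ncard ∧
        ∀ y z : C, G.Adj x ↑y → G.Adj x ↑z →
          (G.induce C).connectedComponentMk y = (G.induce C).connectedComponentMk z} with hW
  have hrep : ∀ κ : (G.induce C).ConnectedComponent,
      ∃ z : C, (G.induce C).connectedComponentMk z = κ := fun κ => κ.exists_rep
  choose rt hrt using hrep
  set d : C → ℕ :=
    fun z => (G.induce C).dist z (rt ((G.induce C).connectedComponentMk z)) with hd
  have hreach : ∀ z : C, (G.induce C).Reachable z (rt ((G.induce C).connectedComponentMk z)) :=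
    fun z => (SimpleGraph.ConnectedComponent.exact (hrt _)).symm
  have hd0 : ∀ z : C, d z = 0 → z = rt ((G.induce C).connectedComponentMk z) := by
    intro z h
    simp only [hd] at h
    rcases SimpleGraph.dist_eq_zero_iff_eq_or_not_reachable.mp h with h' | h'
    · exact h'
    · exact absurd (hreach z) h'
  have two_nbrs : ∀ x ∈ W, ∃ a b : C, G.Adj x ↑a ∧ G.Adj x ↑b ∧ a ≠ b := by
    intro x hx
    obtain ⟨a, ha, b, hb, hab⟩ := (Set.one_lt_ncard (Set.toFinite _)).mp hx.2.1
    exact ⟨⟨a, ha.2⟩, ⟨b, hb.2⟩, ha.1, hb.1, fun h => hab (congrArg Subtype.val h)⟩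
  have hmaxex : ∀ x, x ∈ W → ∃ z : C, G.Adj x ↑z ∧ ∀ y : C, G.Adj x ↑y → d y ≤ d z := by
    intro x hx
    obtain ⟨a, b, haadj, _, _⟩ := two_nbrs x hx
    obtain ⟨z, hz, hzmax⟩ :=
      Set.exists_max_image {y : C | G.Adj x ↑y} d (Set.toFinite _) ⟨a, haadj⟩
    exact ⟨z, hz, hzmax⟩
  set φ : V → V := fun x =>
    if h : ∃ z : C, G.Adj x ↑z ∧ ∀ y : C, G.Adj x ↑y → d y ≤ d z then ↑h.choose else x
    with hφ
  have hφspec : ∀ x, x ∈ W →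
      ∃ z : C, (z : V) = φ x ∧ G.Adj x ↑z ∧ ∀ y : C, G.Adj x ↑y → d y ≤ d z := by
    intro x hx
    have h := hmaxex x hx
    refine ⟨h.choose, ?_, h.choose_spec.1, h.choose_spec.2⟩
    simp only [hφ, dif_pos h]
  set R : Set V := Set.range (fun κ : (G.induce C).ConnectedComponent => (rt κ : V)) with hR
  have hRC : R ⊆ C := by
    rintro _ ⟨κ, rfl⟩
    exact (rt κ).2
  have hrtinj : Function.Injective (fun κ : (G.induce C).ConnectedComponent => (rt κ : V)) := by
    intro κ κ' h
    have h2 : rt κ = rt κ' := Subtype.coe_injective h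
    rw [← hrt κ, ← hrt κ', h2]
  have hRcard : R.ncard = k := by
    rw [hR, ← Nat.card_coe_set_eq, Nat.card_range_of_injective hrtinj, hk]
  have hmem : ∀ x ∈ W, φ x ∈ C \ R := by
    intro x hx
    obtain ⟨z, hzeq, hzadj, hzmax⟩ := hφspec x hx
    refine ⟨hzeq ▸ z.2, ?_⟩
    intro hmemR
    rw [hR] at hmemR
    obtain ⟨κ, hκ⟩ := hmemR
    have hκ' : (rt κ : V) = φ x := hκ
    have hz_rt : z = rt κ := Subtype.coe_injective (hzeq.trans hκ'.symm)
    have hκz : (G.induce C).connectedComponentMk z = κ := by rw [hz_rt]; exact hrt κ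
    have hdz : d z = 0 := by
      simp only [hd]
      rw [hκz, ← hz_rt]
      exact SimpleGraph.dist_self
    obtain ⟨a, b, haadj, hbadj, hab⟩ := two_nbrs x hx
    have ha0 : d a = 0 := Nat.le_zero.mp (hdz ▸ hzmax a haadj)
    have hb0 : d b = 0 := Nat.le_zero.mp (hdz ▸ hzmax b hbadj)
    have hza : (G.induce C).connectedComponentMk a = (G.induce C).connectedComponentMk z :=
      hx.2.2 a z haadj hzadj
    have hzb : (G.induce C).connectedComponentMk b = (G.induce C).connectedComponentMk z :=
      hx.2.2 b z hbadj hzadj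
    apply hab
    rw [hd0 a ha0, hd0 b hb0, hza, hzb]
  have hinjOn : Set.InjOn φ W := by
    intro x hx x' hx' heq
    by_contra hne
    obtain ⟨z, hzeq, hzadj, hzmax⟩ := hφspec x hx
    obtain ⟨z', hzeq', hzadj', hzmax'⟩ := hφspec x' hx'
    have hzz : z = z' := Subtype.coe_injective
      (show (z : V) = ↑z' by rw [hzeq, hzeq', heq])
    subst hzz
    have hSS : G.neighborSet x ∩ C ≠ G.neighborSet x' ∩ C := hC.2 x x' hx.1 hx'.1 hne
    have hdiff : ∃ a : V, a ∈ C ∧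
        ((G.Adj x a ∧ ¬ G.Adj x' a) ∨ (G.Adj x' a ∧ ¬ G.Adj x a)) := by
      by_contra hcon
      push_neg at hcon
      apply hSS
      ext a
      simp only [Set.mem_inter_iff, SimpleGraph.mem_neighborSet]
      constructor
      · rintro ⟨h1, h2⟩
        exact ⟨(hcon a h2).1 h1, h2⟩
      · rintro ⟨h1, h2⟩
        exact ⟨(hcon a h2).2 h1, h2⟩
    have main : ∀ x1 x2 : V, x1 ∈ W → x2 ∈ W →
        G.Adj x1 ↑z → G.Adj x2 ↑z →
        (∀ y : C, G.Adj x1 ↑y → d y ≤ d z) → (∀ y : C, G.Adj x2 ↑y → d y ≤ d z) →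
        ∀ u : C, G.Adj x1 ↑u → ¬ G.Adj x2 ↑u → False := by
      intro x1 x2 hx1 hx2 h1z h2z hmax1 hmax2 u h1u h2u
      obtain ⟨a2, b2, ha2, hb2, hab2⟩ := two_nbrs x2 hx2
      have hv : ∃ v : C, G.Adj x2 ↑v ∧ v ≠ z := by
        by_cases h : a2 = z
        · exact ⟨b2, hb2, fun hbz => hab2 (h.trans hbz.symm)⟩
        · exact ⟨a2, ha2, h⟩
      obtain ⟨v, hvadj, hvz⟩ := hv
      have hune : u ≠ z := by
        intro h
        exact h2u (h ▸ h2z)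
      have huv : u ≠ v := by
        intro h
        exact h2u (h ▸ hvadj)
      have hcomp_uz : (G.induce C).connectedComponentMk u = (G.induce C).connectedComponentMk z :=
        hx1.2.2 u z h1u h1z
      have hcomp_vz : (G.induce C).connectedComponentMk v = (G.induce C).connectedComponentMk z :=
        hx2.2.2 v z hvadj h2z
      have hzu : G.Adj ↑z ↑u :=
        (clique_of_common_nbr hB hx1.1 h1u h1z hune hcomp_uz).symm
      have hzv : G.Adj ↑z ↑v :=
        (clique_of_common_nbr hB hx2.1 hvadj h2z hvz hcomp_vz).symm
      have hdu : (G.induce C).dist u (rt ((G.induce C).connectedComponentMk z))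
          ≤ (G.induce C).dist z (rt ((G.induce C).connectedComponentMk z)) := by
        have h := hmax1 u h1u
        simp only [hd] at h
        rwa [hcomp_uz] at h
      have hdv : (G.induce C).dist v (rt ((G.induce C).connectedComponentMk z))
          ≤ (G.induce C).dist z (rt ((G.induce C).connectedComponentMk z)) := by
        have h := hmax2 v hvadj
        simp only [hd] at h
        rwa [hcomp_vz] at h
      have hreach_u : (G.induce C).Reachable u (rt ((G.induce C).connectedComponentMk z)) := by
        have h := hreach u
        rwa [hcomp_uz] at h
      have hreach_v : (G.induce C).Reachable v (rt ((G.induce C).connectedComponentMk z)) := by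
        have h := hreach v
        rwa [hcomp_vz] at h
      obtain ⟨p1, hp1⟩ := walk_avoiding hreach_u hdu hune
      obtain ⟨p2, hp2⟩ := walk_avoiding hreach_v hdv hvz
      have hq : ∃ q : (G.induce C).Walk u v, z ∉ q.support := by
        refine ⟨p1.append p2.reverse, ?_⟩
        rw [SimpleGraph.Walk.mem_support_append_iff]
        rintro (h | h)
        · exact hp1 h
        · rw [SimpleGraph.Walk.support_reverse] at h
          exact hp2 (List.mem_reverse.mp h)
      obtain ⟨q, hqz⟩ := hq
      have hz_not : ∀ i, i ≤ (q.map (SimpleGraph.Embedding.induce C).toHom).length →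
          (q.map (SimpleGraph.Embedding.induce C).toHom).getVert i ≠ ↑z := by
        intro i hi hze
        have hmem2 : (z : V) ∈ (q.map (SimpleGraph.Embedding.induce C).toHom).support := by
          rw [SimpleGraph.Walk.mem_support_iff_exists_getVert]
          exact ⟨i, hze, hi⟩
        rw [SimpleGraph.Walk.support_map] at hmem2
        obtain ⟨y, hy, hyx⟩ := List.mem_map.mp hmem2
        rw [show y = z from Subtype.coe_injective hyx] at hy
        exact hqz hy
      have hadjuv : G.Adj ↑u ↑v :=
        adj_of_avoid hB ↑z (q.map (SimpleGraph.Embedding.induce C).toHom).length ↑u ↑v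
          (q.map (SimpleGraph.Embedding.induce C).toHom).getVert
          (SimpleGraph.Walk.getVert_zero _) (SimpleGraph.Walk.getVert_length _)
          (fun i hi => SimpleGraph.Walk.adj_getVert_succ _ hi) hz_not hzu hzv
          (Subtype.coe_injective.ne huv)
      refine diamond_of hB hzv h2z.symm hvadj.symm hzu hadjuv.symm h2u ?_
      intro h
      exact hx2.1 (by rw [h]; exact u.2)
    obtain ⟨a, haC, hcase⟩ := hdiff
    rcases hcase with ⟨h1, h2⟩ | ⟨h1, h2⟩
    · exact main x x' hx hx' hzadj hzadj' hzmax hzmax' ⟨a, haC⟩ h1 h2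
    · exact main x' x hx' hx hzadj' hzadj hzmax' hzmax ⟨a, haC⟩ h1 h2
  calc W.ncard ≤ (C \ R).ncard :=
        Set.ncard_le_ncard_of_injOn φ hmem hinjOn (Set.toFinite _)
    _ = C.ncard - R.ncard := Set.ncard_diff hRC (Set.toFinite _)
    _ = C.ncard - k := by rw [hRcard]
end

section
/- Let G be a finite graph and let C ⊆ V(G) be an identifying code of G. Then the number of vertices x ∈ V(G) \ C with |N(x) ∩ C| = 1 is at most |C| − n_0(G[C]), where n_0(G[C]) is the number of isolated vertices of the subgraph of G induced by C. -/
open SimpleGraph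

variable {V : Type*}

/-- If `C` is an identifying code of a finite graph `G`, then the
number of vertices outside `C` with exactly one neighbor in `C` is at most
`|C| - n₀(G[C])`, where `n₀(G[C])` is the number of isolated vertices of the
subgraph induced by `C`. -/
theorem card_V2_le_id {V : Type*} [Fintype V] (G : SimpleGraph V)
    (C : Set V) (hC : IsIdCode G C) :
    {x : V | x ∉ C ∧ (G.neighborSet x ∩ C).ncard = 1}.ncard
      ≤ C.ncard - {v : V | v ∈ C ∧ ∀ w ∈ C, ¬ G.Adj v w}.ncard := by
  classical
  set I := {v : V | v ∈ C ∧ ∀ w ∈ C, ¬ G.Adj v w} with hI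
  set X := {x : V | x ∉ C ∧ (G.neighborSet x ∩ C).ncard = 1} with hX
  have key : ∀ x ∈ X, ∃ c, G.neighborSet x ∩ C = {c} := fun x hx =>
    Set.ncard_eq_one.mp hx.2
  choose! f hf using key
  -- closed neighborhood of x ∉ C intersected with C
  have hclosed : ∀ x : V, x ∉ C → closedNbhd G x ∩ C = G.neighborSet x ∩ C := by
    intro x hx
    unfold closedNbhd
    rw [Set.insert_inter_of_notMem hx]
  have hmem : ∀ x ∈ X, f x ∈ C ∧ G.Adj x (f x) := by
    intro x hx
    have : f x ∈ G.neighborSet x ∩ C := by rw [hf x hx]; exact rfl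
    exact ⟨this.2, this.1⟩
  have hnotI : ∀ x ∈ X, f x ∉ I := by
    intro x hx hfI
    have hxC : x ∉ C := hx.1
    have hne : x ≠ f x := fun h => hxC (h ▸ (hmem x hx).1)
    apply hC.2 x (f x) hne
    rw [hclosed x hxC, hf x hx]
    -- closedNbhd (f x) ∩ C = {f x}
    have h1 : G.neighborSet (f x) ∩ C = ∅ := by
      ext w
      simp only [Set.mem_inter_iff, Set.mem_empty_iff_false, iff_false, not_and,
        SimpleGraph.mem_neighborSet]
      intro hadj hwC
      exact hfI.2 w hwC hadj
    unfold closedNbhd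
    rw [Set.insert_inter_of_mem hfI.1, h1]; simp
  have hinj : Set.InjOn f X := by
    intro x hx y hy hxy
    by_contra hne
    apply hC.2 x y hne
    rw [hclosed x hx.1, hclosed y hy.1, hf x hx, hf y hy, hxy]
  have hICsub : I ⊆ C := fun v hv => hv.1
  have h1 : X.ncard ≤ (C \ I).ncard := by
    apply Set.ncard_le_ncard_of_injOn f _ hinj (Set.toFinite _)
    intro x hx
    exact ⟨(hmem x hx).1, hnotI x hx⟩
  calc X.ncard ≤ (C \ I).ncard := h1
    _ = C.ncard - I.ncard := Set.ncard_diff hICsub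
end
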